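/- arXiv:1810.10210 — 4 statements merged into one kernel-verified Lean document; each statement's English description precedes it below -/
import Mathlib

section
/- Let V : ℝ² → ℝ be C¹, positively homogeneous of degree 2, with V(z) > 0 for z ≠ 0. Then every nontrivial solution of Jz' = ∇V(z) is periodic with the same minimal period τ_V = ∫₀^{2π} dθ / (2V(cos θ, sin θ)). -/
/-!
By Euler's identity `DV(w) w = 2 V(w)`, the equation `J z' = ∇V(z)` conserves the energy
`V(z) = c > 0`, and in polar coordinates `z = R (cos A, sin A)` it gives
`A' = -2c / R² = -2 V(cos A, sin A)`, because `R² V(cos A, sin A) = c`. The angle therefore solves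
an autonomous equation on the circle that does not involve `c`: it decreases by `2π` in time
`τ_V = ∫₀^{2π} dθ / (2 V(cos θ, sin θ))`, and, `R` being determined by `A` on the energy level,
`z s = z t` exactly when `A s ≡ A t (mod 2π)`. The continuous angle `A` itself comes from solving
the complex linear equation `ζ' = (ζ' / ζ) ζ` for `ζ = z₁ + i z₂`.
-/

/-- The standard symplectic matrix `J = [[0,-1],[1,0]]` acting on `ℝ²`. -/
def J2 (w : ℝ × ℝ) : ℝ × ℝ := (-w.2, w.1)

/-- The gradient of a function `V : ℝ² → ℝ`. -/
noncomputable def grad2 (V : ℝ × ℝ → ℝ) (z : ℝ × ℝ) : ℝ × ℝ :=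
  (fderiv ℝ V z (1, 0), fderiv ℝ V z (0, 1))

open Real Filter Topology intervalIntegral

theorem Complex.eq_mul_exp_integral_of_hasDerivAt {ζ a : ℝ → ℂ} (ha : Continuous a)
    (hζ : ∀ t, HasDerivAt ζ (a t * ζ t) t) (t : ℝ) :
    ζ t = ζ 0 * Complex.exp (∫ s in (0 : ℝ)..t, a s) := by
  set E : ℝ → ℂ := fun t => ∫ s in (0 : ℝ)..t, a s
  have hE : ∀ t, HasDerivAt E (a t) t := fun t => (ha.integral_hasStrictDerivAt 0 t).hasDerivAt
  have hderiv : ∀ t, HasDerivAt (fun t => ζ t * Complex.exp (-E t)) 0 t := fun t =>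
    ((hζ t).mul (hE t).neg.cexp).congr_deriv (by ring)
  have hconst := is_const_of_deriv_eq_zero (fun t => (hderiv t).differentiableAt)
    (fun t => (hderiv t).deriv) t 0
  simp only [E, integral_same, neg_zero, Complex.exp_zero, mul_one] at hconst
  rw [← hconst, mul_assoc, ← Complex.exp_add, neg_add_cancel, Complex.exp_zero, mul_one]

theorem Complex.exists_polar_of_hasDerivAt {ζ ζ' : ℝ → ℂ} (hζ : ∀ t, HasDerivAt ζ (ζ' t) t)
    (hζ' : Continuous ζ') (hne : ∀ t, ζ t ≠ 0) :
    ∃ R A : ℝ → ℝ, (∀ t, 0 < R t) ∧ (∀ t, HasDerivAt A (ζ' t / ζ t).im t) ∧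
      ∀ t, ζ t = R t * Complex.exp (A t * Complex.I) := by
  set a : ℝ → ℂ := fun t => ζ' t / ζ t
  have hcont : Continuous ζ := continuous_iff_continuousAt.2 fun t => (hζ t).continuousAt
  have ha : Continuous a := hζ'.div hcont hne
  set E : ℝ → ℂ := fun t => ∫ s in (0 : ℝ)..t, a s
  refine ⟨fun t => ‖ζ 0‖ * Real.exp (E t).re, fun t => (ζ 0).arg + (E t).im,
    fun t => mul_pos (norm_pos_iff.2 (hne 0)) (Real.exp_pos _), fun t => ?_, fun t => ?_⟩
  · exact (Complex.imCLM.hasFDerivAt.comp_hasDerivAt t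
      (ha.integral_hasStrictDerivAt 0 t).hasDerivAt).const_add _
  · have hsol := eq_mul_exp_integral_of_hasDerivAt (ζ := ζ) ha
      (fun t => by simpa only [a, div_mul_cancel₀ _ (hne t)] using hζ t) t
    rw [hsol, show (∫ s in (0 : ℝ)..t, a s) = E t from rfl]
    conv_lhs => rw [← Complex.norm_mul_exp_arg_mul_I (ζ 0), ← Complex.re_add_im (E t)]
    push_cast
    rw [add_mul, Complex.exp_add, Complex.exp_add]
    ring

theorem exists_polar_of_hasDerivAt {z z' : ℝ → ℝ × ℝ} (hz : ∀ t, HasDerivAt z (z' t) t)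
    (hz' : Continuous z') (hne : ∀ t, z t ≠ 0) :
    ∃ R A : ℝ → ℝ, (∀ t, 0 < R t) ∧
      (∀ t, HasDerivAt A (((z t).1 * (z' t).2 - (z t).2 * (z' t).1) / R t ^ 2) t) ∧
      ∀ t, z t = R t • (cos (A t), sin (A t)) := by
  let e := Complex.equivRealProdCLM
  obtain ⟨R, A, hR, hA, hpolar⟩ := Complex.exists_polar_of_hasDerivAt
    (fun t => e.symm.hasFDerivAt.comp_hasDerivAt t (hz t)) (e.symm.continuous.comp hz')
    (fun t => by simpa using hne t)
  have hz_eq : ∀ t, z t = e (R t * Complex.exp (A t * Complex.I)) := fun t => by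
    rw [← hpolar, Function.comp_apply, ContinuousLinearEquiv.apply_symm_apply]
  refine ⟨R, A, hR, fun t => ?_, fun t => ?_⟩
  · convert hA t using 1
    have hnormSq : Complex.normSq (e.symm (z t)) = R t ^ 2 := by
      rw [← Function.comp_apply (f := e.symm), hpolar, Complex.normSq_eq_norm_sq, norm_mul,
        Complex.norm_exp_ofReal_mul_I, Complex.norm_real, Real.norm_of_nonneg (hR t).le, mul_one]
    simp only [Function.comp_apply, Complex.div_im, hnormSq]
    simp only [ContinuousLinearEquiv.coe_coe, Complex.equivRealProdCLM_symm_apply_im,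
      Complex.equivRealProdCLM_symm_apply_re, e]
    ring
  · rw [hz_eq]
    simp [e, Complex.exp_ofReal_mul_I_re, Complex.exp_ofReal_mul_I_im]

theorem cos_sin_eq_iff {a b : ℝ} : (cos a, sin a) = (cos b, sin b) ↔ (a : Real.Angle) = b := by
  refine ⟨fun h => Real.Angle.cos_sin_inj (congrArg Prod.fst h) (congrArg Prod.snd h), fun h => ?_⟩
  rw [← Real.Angle.cos_coe, ← Real.Angle.sin_coe, h, Real.Angle.cos_coe, Real.Angle.sin_coe]

theorem smul_cos_sin_eq_iff {r s a b : ℝ} (hr : 0 < r) (hs : 0 < s) :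
    r • (cos a, sin a) = s • (cos b, sin b) ↔ r = s ∧ (a : Real.Angle) = b := by
  refine ⟨fun h => ?_, fun ⟨hrs, hab⟩ => by rw [hrs, cos_sin_eq_iff.2 hab]⟩
  obtain ⟨h₁, h₂⟩ := Prod.ext_iff.1 h
  simp only [Prod.smul_mk, smul_eq_mul] at h₁ h₂
  have hrs : r = s := by
    have : r ^ 2 = s ^ 2 := by
      linear_combination (r * cos a + s * cos b) * h₁ + (r * sin a + s * sin b) * h₂ -
        r ^ 2 * sin_sq_add_cos_sq a + s ^ 2 * sin_sq_add_cos_sq b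
    exact (pow_left_inj₀ hr.le hs.le two_ne_zero).1 this
  subst hrs
  exact ⟨rfl, cos_sin_eq_iff.1 (Prod.ext (mul_left_cancel₀ hr.ne' h₁)
    (mul_left_cancel₀ hr.ne' h₂))⟩

theorem cos_sin_ne_zero (θ : ℝ) : (cos θ, sin θ) ≠ 0 := fun h => by
  obtain ⟨h₁, h₂⟩ := Prod.ext_iff.1 h
  have := sin_sq_add_cos_sq θ
  simp only [Prod.fst_zero, Prod.snd_zero] at h₁ h₂
  simp [h₁, h₂] at this

section Homogeneous

variable {E : Type*} [NormedAddCommGroup E] [NormedSpace ℝ E] {V : E → ℝ} {n : ℕ} {w : E}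

theorem apply_zero_of_homogeneous (hV : ContinuousAt V 0) (hn : n ≠ 0)
    (hhom : ∀ l : ℝ, 0 < l → V (l • w) = l ^ n * V w) : V 0 = 0 := by
  have hsmul : Tendsto (fun l : ℝ => l • w) (𝓝[>] 0) (𝓝 0) :=
    ((by fun_prop : Continuous fun l : ℝ => l • w).tendsto' 0 0 (zero_smul ℝ w)).mono_left
      nhdsWithin_le_nhds
  have hpow : Tendsto (fun l : ℝ => l ^ n * V w) (𝓝[>] 0) (𝓝 0) :=
    ((by fun_prop : Continuous fun l : ℝ => l ^ n * V w).tendsto' 0 0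
      (by simp [hn])).mono_left nhdsWithin_le_nhds
  refine tendsto_nhds_unique (hV.tendsto.comp hsmul) (hpow.congr' ?_)
  filter_upwards [self_mem_nhdsWithin] with l hl using (hhom l hl).symm

theorem fderiv_apply_self_of_homogeneous (hV : DifferentiableAt ℝ V w)
    (hhom : ∀ l : ℝ, 0 < l → V (l • w) = l ^ n * V w) : fderiv ℝ V w w = n * V w := by
  have hcomp : HasDerivAt (fun l : ℝ => V (l • w)) (fderiv ℝ V w w) 1 := by
    have hline : HasDerivAt (fun l : ℝ => l • w) w 1 := by
      simpa using (hasDerivAt_id (1 : ℝ)).smul_const w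
    exact hV.hasFDerivAt.comp_hasDerivAt_of_eq 1 hline (one_smul ℝ w).symm
  have hpow : HasDerivAt (fun l : ℝ => l ^ n * V w) (n * V w) 1 := by
    simpa using (hasDerivAt_pow n (1 : ℝ)).mul_const (V w)
  refine hcomp.unique (hpow.congr_of_eventuallyEq ?_)
  filter_upwards [eventually_gt_nhds one_pos] with l hl using hhom l hl

end Homogeneous

theorem Function.Periodic.intervalIntegral_zero_sub_eq {g : ℝ → ℝ} {p : ℝ}
    (hper : Function.Periodic g p) (hg : Continuous g) (x : ℝ) :
    ∫ θ in (0 : ℝ)..x - p, g θ = (∫ θ in (0 : ℝ)..x, g θ) - ∫ θ in (0 : ℝ)..p, g θ := by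
  have := hper.intervalIntegral_add_eq_add 0 (x - p) fun _ _ => hg.intervalIntegrable _ _
  rw [sub_add_cancel, zero_add] at this
  linarith

section AngularEquation

variable {g A : ℝ → ℝ} {p : ℝ}

theorem strictMono_integral_of_pos (hg : Continuous g) (hgpos : ∀ θ, 0 < g θ) :
    StrictMono fun x => ∫ θ in (0 : ℝ)..x, g θ :=
  strictMono_of_deriv_pos fun x => by
    rw [(hg.integral_hasStrictDerivAt 0 x).hasDerivAt.deriv]
    exact hgpos x

theorem integral_comp_eq_sub (hg : Continuous g) (hgpos : ∀ θ, 0 < g θ)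
    (hA : ∀ t, HasDerivAt A (-(g (A t))⁻¹) t) (t : ℝ) :
    ∫ θ in (0 : ℝ)..A t, g θ = (∫ θ in (0 : ℝ)..A 0, g θ) - t := by
  have hderiv : ∀ t, HasDerivAt (fun t => (∫ θ in (0 : ℝ)..A t, g θ) + t) 0 t := fun t => by
    refine (((hg.integral_hasStrictDerivAt 0 (A t)).hasDerivAt.comp t (hA t)).add
      (hasDerivAt_id t)).congr_deriv ?_
    field_simp [(hgpos (A t)).ne']
    ring
  have := is_const_of_deriv_eq_zero (fun t => (hderiv t).differentiableAt)
    (fun t => (hderiv t).deriv) t 0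
  linarith

theorem apply_add_integral_eq_sub (hg : Continuous g) (hgpos : ∀ θ, 0 < g θ)
    (hper : Function.Periodic g p) (hA : ∀ t, HasDerivAt A (-(g (A t))⁻¹) t) (t : ℝ) :
    A (t + ∫ θ in (0 : ℝ)..p, g θ) = A t - p := by
  apply (strictMono_integral_of_pos hg hgpos).injective
  dsimp only
  rw [hper.intervalIntegral_zero_sub_eq hg, integral_comp_eq_sub hg hgpos hA,
    integral_comp_eq_sub hg hgpos hA t]
  ring

theorem integral_le_of_apply_eq_add_int_mul (hg : Continuous g) (hgpos : ∀ θ, 0 < g θ)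
    (hper : Function.Periodic g p) (hA : ∀ t, HasDerivAt A (-(g (A t))⁻¹) t) (hp : 0 < p)
    {s : ℝ} (hs : 0 < s) {n : ℤ} (hn : A s = A 0 + n * p) :
    ∫ θ in (0 : ℝ)..p, g θ ≤ s := by
  have hmono := strictMono_integral_of_pos hg hgpos
  have hAs := integral_comp_eq_sub hg hgpos hA s
  have hlt : A s < A 0 := hmono.lt_iff_lt.1 (by simp only [hAs]; linarith)
  have hneg : n ≤ -1 := by
    have : (n : ℝ) < 0 := by nlinarith
    have : n < 0 := by exact_mod_cast this
    omega
  have hle : A s ≤ A 0 - p := by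
    have : (n : ℝ) * p ≤ -1 * p := mul_le_mul_of_nonneg_right (by exact_mod_cast hneg) hp.le
    linarith
  have := hmono.monotone hle
  rw [hAs, hper.intervalIntegral_zero_sub_eq hg] at this
  linarith

end AngularEquation

section Solution

variable {V : ℝ × ℝ → ℝ} {z z' : ℝ → ℝ × ℝ}

theorem fderiv_apply_eq_of_J2_eq_grad2 {v w : ℝ × ℝ}
    (h : J2 v = grad2 V w) (u : ℝ × ℝ) : fderiv ℝ V w u = v.1 * u.2 - v.2 * u.1 := by
  obtain ⟨h₁, h₂⟩ := Prod.ext_iff.1 h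
  have hu : u = u.1 • ((1 : ℝ), (0 : ℝ)) + u.2 • ((0 : ℝ), (1 : ℝ)) := by simp
  rw [hu, map_add, map_smul, map_smul]
  simp only [J2, grad2] at h₁ h₂
  simp only [smul_eq_mul, ← h₁, ← h₂, Prod.fst_add, Prod.snd_add, Prod.smul_mk]
  ring

theorem eq_of_J2_eq_grad2 {v w : ℝ × ℝ} (h : J2 v = grad2 V w) :
    v = ((grad2 V w).2, -(grad2 V w).1) := by
  rw [← h, J2]
  simp

theorem continuous_grad2 (hV : ContDiff ℝ 1 V) : Continuous (grad2 V) :=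
  have hD := hV.continuous_fderiv one_ne_zero
  (hD.clm_apply continuous_const).prodMk (hD.clm_apply continuous_const)

theorem apply_eq_apply_of_J2_eq_grad2 (hV : Differentiable ℝ V)
    (hz : ∀ t, HasDerivAt z (z' t) t) (hode : ∀ t, J2 (z' t) = grad2 V (z t)) (s t : ℝ) :
    V (z s) = V (z t) := by
  have hderiv : ∀ t, HasDerivAt (fun t => V (z t)) 0 t := fun t => by
    have := (hV (z t)).hasFDerivAt.comp_hasDerivAt t (hz t)
    rwa [fderiv_apply_eq_of_J2_eq_grad2 (hode t), mul_comm, sub_self] at this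
  exact is_const_of_deriv_eq_zero (fun t => (hderiv t).differentiableAt)
    (fun t => (hderiv t).deriv) s t

theorem exists_angle_of_J2_eq_grad2 (hV : ContDiff ℝ 1 V)
    (hhom : ∀ l : ℝ, 0 < l → ∀ w : ℝ × ℝ, w ≠ 0 → V (l • w) = l ^ 2 * V w)
    (hpos : ∀ w : ℝ × ℝ, w ≠ 0 → 0 < V w)
    (hz : ∀ t, HasDerivAt z (z' t) t) (hode : ∀ t, J2 (z' t) = grad2 V (z t))
    (hnontriv : ∃ t, z t ≠ 0) :
    ∃ A : ℝ → ℝ, (∀ t, HasDerivAt A (-(2 * V (cos (A t), sin (A t)))) t) ∧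
      ∀ s t, z s = z t ↔ (A s : Real.Angle) = A t := by
  obtain ⟨t₀, ht₀⟩ := hnontriv
  have hdiff := hV.differentiable one_ne_zero
  have henergy : ∀ t, V (z t) = V (z t₀) := (apply_eq_apply_of_J2_eq_grad2 hdiff hz hode · t₀)
  have hne : ∀ t, z t ≠ 0 := fun t h => (hpos _ ht₀).ne' <| by
    rw [← henergy t, h, apply_zero_of_homogeneous hV.continuous.continuousAt two_ne_zero
      (hhom · · _ ht₀)]
  have hz' : Continuous z' := by
    rw [show z' = _ from funext fun t => eq_of_J2_eq_grad2 (hode t)]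
    have := (continuous_grad2 hV).comp (continuous_iff_continuousAt.2 fun t => (hz t).continuousAt)
    exact this.snd.prodMk this.fst.neg
  obtain ⟨R, A, hR, hA, hpolar⟩ := exists_polar_of_hasDerivAt hz hz' hne
  have hRW : ∀ t, R t ^ 2 * V (cos (A t), sin (A t)) = V (z t₀) := fun t => by
    rw [← hhom _ (hR t) _ (cos_sin_ne_zero _), ← hpolar, henergy]
  refine ⟨A, fun t => ?_, fun s t => ?_⟩
  · convert hA t using 1
    have heuler := fderiv_apply_self_of_homogeneous (hdiff (z t)) (hhom · · _ (hne t))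
    rw [fderiv_apply_eq_of_J2_eq_grad2 (hode t)] at heuler
    rw [eq_div_iff (by have := hR t; positivity)]
    push_cast at heuler
    linear_combination heuler - 2 * hRW t + 2 * henergy t
  · rw [hpolar s, hpolar t, smul_cos_sin_eq_iff (hR s) (hR t)]
    refine ⟨And.right, fun h => ⟨?_, h⟩⟩
    have hRR := (hRW s).trans (hRW t).symm
    rw [cos_sin_eq_iff.2 h] at hRR
    exact (pow_left_inj₀ (hR s).le (hR t).le two_ne_zero).1
      (mul_right_cancel₀ (hpos _ (cos_sin_ne_zero _)).ne' hRR)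

end Solution

/-- Every nontrivial solution of `Jz' = ∇V(z)` is periodic with the same minimal
period `τ_V = ∫₀^{2π} dθ / (2V(cos θ, sin θ))`. -/
theorem isochronous_center (V : ℝ × ℝ → ℝ)
    (hV : ContDiff ℝ 1 V)
    (hhom : ∀ l : ℝ, 0 < l → ∀ w : ℝ × ℝ, w ≠ 0 → V (l • w) = l ^ 2 * V w)
    (hpos : ∀ w : ℝ × ℝ, w ≠ 0 → 0 < V w)
    (z z' : ℝ → ℝ × ℝ)
    (hz : ∀ t, HasDerivAt z (z' t) t)
    (hode : ∀ t, J2 (z' t) = grad2 V (z t))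
    (hnontriv : ∃ t, z t ≠ 0) :
    Function.Periodic z (∫ θ in (0:ℝ)..(2 * Real.pi), 1 / (2 * V (Real.cos θ, Real.sin θ))) ∧
      ∀ τ : ℝ, 0 < τ → Function.Periodic z τ →
        (∫ θ in (0:ℝ)..(2 * Real.pi), 1 / (2 * V (Real.cos θ, Real.sin θ))) ≤ τ := by
  obtain ⟨A, hA, hzA⟩ := exists_angle_of_J2_eq_grad2 hV hhom hpos hz hode hnontriv
  set g : ℝ → ℝ := fun θ => 1 / (2 * V (cos θ, sin θ))
  have hgpos : ∀ θ, 0 < g θ := fun θ => by have := hpos _ (cos_sin_ne_zero θ); positivity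
  have hg : Continuous g :=
    continuous_const.div (by fun_prop) fun θ => (one_div_pos.1 (hgpos θ)).ne'
  have hgper : Function.Periodic g (2 * π) := fun θ => by
    simp only [g, cos_add_two_pi, sin_add_two_pi]
  have hA' : ∀ t, HasDerivAt A (-(g (A t))⁻¹) t := by simpa only [g, one_div, inv_inv] using hA
  refine ⟨fun t => (hzA _ _).2 ?_, fun τ hτ hper => ?_⟩
  · rw [apply_add_integral_eq_sub hg hgpos hgper hA', Real.Angle.coe_sub, Real.Angle.coe_two_pi,
      sub_zero]
  · obtain ⟨n, hn⟩ := Real.Angle.angle_eq_iff_two_pi_dvd_sub.1 ((hzA τ 0).1 (by simpa using hper 0))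
    exact integral_le_of_apply_eq_add_int_mul hg hgpos hgper hA' two_pi_pos hτ (by linarith)
end

section
/- Let μ, ν > 0 and T > 0. The Dirichlet problem x'' + μx⁺ − νx⁻ = 0, x(0) = 0 = x(T) admits a nontrivial solution if and only if there exists k ∈ ℕ such that T = π[(k+1)/√μ + k/√ν], or T = π[k/√μ + (k+1)/√ν], or T = π(k+1)[1/√μ + 1/√ν]. -/
/-!
The equation is autonomous, positively homogeneous, and turns into itself with `μ` and `ν`
exchanged under `x ↦ -x`; its phase-space field `(x, x') ↦ (x', νx⁻ - μx⁺)` is Lipschitz, so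
solutions are determined by `(x(a), x'(a))`. A nontrivial solution with `x(0) = 0` therefore has
`x'(0) ≠ 0`, and if `x'(0) = m > 0` it coincides with `m sin(√μ t)/√μ` up to its next zero
`π/√μ`, where `x' = -m`. Then `-x(· + π/√μ)` solves the exchanged problem with the same initial
slope, so the zeros of `x` are exactly the partial sums of `π/√μ, π/√ν, π/√μ, …`. Conversely,
gluing such half-waves produces a `C²` solution: at a junction the values and slopes agree by
construction, and then the second derivatives agree because the equation fixes `x''` from `x`.
-/

open Real Set

section Piecewise

variable {x y x' y' : ℝ → ℝ} {c : ℝ}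

lemma hasDerivAt_ite_le (hx : ∀ t, HasDerivAt x (x' t) t) (hy : ∀ t, HasDerivAt y (y' t) t)
    (h0 : x c = y c) (h1 : x' c = y' c) (t : ℝ) :
    HasDerivAt (fun u => if u ≤ c then x u else y u) (if t ≤ c then x' t else y' t) t := by
  rcases lt_trichotomy t c with h | rfl | h
  · rw [if_pos h.le]
    refine (hx t).congr_of_eventuallyEq ?_
    filter_upwards [eventually_lt_nhds h] with u hu
    rw [if_pos hu.le]
  · rw [if_pos le_rfl]
    have hl : HasDerivWithinAt (fun u => if u ≤ t then x u else y u) (x' t) (Iic t) t :=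
      (hx t).hasDerivWithinAt.congr (fun u hu => if_pos hu) (if_pos le_rfl)
    have hr : HasDerivWithinAt (fun u => if u ≤ t then x u else y u) (x' t) (Ici t) t := by
      rw [h1]
      refine (hy t).hasDerivWithinAt.congr (fun u hu => ?_) (by rw [if_pos le_rfl, h0])
      rcases (mem_Ici.mp hu).eq_or_lt with rfl | hu
      · rw [if_pos le_rfl, h0]
      · rw [if_neg (not_le.mpr hu)]
    simpa only [Iic_union_Ici, hasDerivWithinAt_univ] using hl.union hr
  · rw [if_neg (not_le.mpr h)]
    refine (hy t).congr_of_eventuallyEq ?_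
    filter_upwards [eventually_gt_nhds h] with u hu
    rw [if_neg (not_le.mpr hu)]

lemma deriv_ite_le (hx : Differentiable ℝ x) (hy : Differentiable ℝ y) (h0 : x c = y c)
    (h1 : deriv x c = deriv y c) :
    deriv (fun u => if u ≤ c then x u else y u) = fun t => if t ≤ c then deriv x t else deriv y t :=
  funext fun t => (hasDerivAt_ite_le (fun t => (hx t).hasDerivAt) (fun t => (hy t).hasDerivAt)
    h0 h1 t).deriv

lemma contDiff_one_ite_le (hx : ContDiff ℝ 1 x) (hy : ContDiff ℝ 1 y) (h0 : x c = y c)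
    (h1 : deriv x c = deriv y c) : ContDiff ℝ 1 (fun u => if u ≤ c then x u else y u) := by
  have hx' := hx.differentiable one_ne_zero
  have hy' := hy.differentiable one_ne_zero
  refine contDiff_one_iff_deriv.mpr ⟨fun t => (hasDerivAt_ite_le (fun t => (hx' t).hasDerivAt)
    (fun t => (hy' t).hasDerivAt) h0 h1 t).differentiableAt, ?_⟩
  rw [deriv_ite_le hx' hy' h0 h1]
  exact (hx.continuous_deriv le_rfl).if_le (hy.continuous_deriv le_rfl) continuous_id
    continuous_const fun t ht => ht ▸ h1

lemma contDiff_two_ite_le (hx : ContDiff ℝ 2 x) (hy : ContDiff ℝ 2 y) (h0 : x c = y c)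
    (h1 : deriv x c = deriv y c) (h2 : deriv (deriv x) c = deriv (deriv y) c) :
    ContDiff ℝ 2 (fun u => if u ≤ c then x u else y u) := by
  have hx' := hx.differentiable two_ne_zero
  have hy' := hy.differentiable two_ne_zero
  refine contDiff_succ_iff_deriv (n := 1).mpr
    ⟨(contDiff_one_ite_le hx.of_succ hy.of_succ h0 h1).differentiable one_ne_zero, by simp, ?_⟩
  rw [deriv_ite_le hx' hy' h0 h1]
  exact contDiff_one_ite_le hx.deriv' hy.deriv' h1 h2

end Piecewise

lemma exists_mem_Icc_ne_zero_of_deriv_ne_zero {x : ℝ → ℝ} {a b : ℝ} (hab : a < b)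
    (hx : DifferentiableAt ℝ x a) (hd : deriv x a ≠ 0) : ∃ t ∈ Icc a b, x t ≠ 0 := by
  by_contra! h
  have ha : a ∈ Icc a b := ⟨le_rfl, hab.le⟩
  exact hd <| (uniqueDiffOn_Icc hab a ha).eq_deriv _ hx.hasDerivAt.hasDerivWithinAt
    ((hasDerivWithinAt_const a _ (0 : ℝ)).congr h (h a ha))

def SolvesOn (μ ν : ℝ) (x : ℝ → ℝ) (s : Set ℝ) : Prop :=
  ∀ t ∈ s, deriv (deriv x) t + μ * max (x t) 0 - ν * max (-(x t)) 0 = 0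

lemma solvesOn_zero (μ ν : ℝ) (s : Set ℝ) : SolvesOn μ ν (fun _ => 0) s := by
  intro t _
  simp

namespace SolvesOn

variable {μ ν a b : ℝ} {x y : ℝ → ℝ} {s : Set ℝ}

lemma mono {s' : Set ℝ} (h : SolvesOn μ ν x s) (hs : s' ⊆ s) : SolvesOn μ ν x s' :=
  fun t ht => h t (hs ht)

lemma neg (h : SolvesOn ν μ x s) : SolvesOn μ ν (fun t => -x t) s := by
  intro t ht
  simp only [deriv.fun_neg', neg_neg]
  linear_combination -h t ht

lemma const_mul {c : ℝ} (hc : 0 ≤ c) (h : SolvesOn μ ν x s) :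
    SolvesOn μ ν (fun t => c * x t) s := by
  intro t ht
  have hpos : max (c * x t) 0 = c * max (x t) 0 := by rw [mul_max_of_nonneg _ _ hc, mul_zero]
  have hneg : max (-(c * x t)) 0 = c * max (-x t) 0 := by
    rw [mul_max_of_nonneg _ _ hc, mul_zero, mul_neg]
  rw [deriv_const_mul_field', deriv_const_mul_field', hpos, hneg]
  linear_combination c * h t ht

lemma comp_add_const (h : SolvesOn μ ν x s) (c : ℝ) :
    SolvesOn μ ν (fun t => x (t + c)) ((· + c) ⁻¹' s) := by
  intro t ht
  have hd : deriv (fun t => x (t + c)) = fun t => deriv x (t + c) :=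
    funext fun t => deriv_comp_add_const x c t
  rw [hd, deriv_comp_add_const (deriv x) c t]
  exact h _ ht

lemma ite_le {c : ℝ} (hx : ContDiff ℝ 2 x) (hy : ContDiff ℝ 2 y)
    (hac : a ≤ c) (hcb : c ≤ b) (hxs : SolvesOn μ ν x (Icc a c)) (hys : SolvesOn μ ν y (Icc c b))
    (h0 : x c = y c) (h1 : deriv x c = deriv y c) :
    ContDiff ℝ 2 (fun u => if u ≤ c then x u else y u) ∧
      SolvesOn μ ν (fun u => if u ≤ c then x u else y u) (Icc a b) := by
  have h2 : deriv (deriv x) c = deriv (deriv y) c := by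
    have hxc := hxs c ⟨hac, le_rfl⟩
    have hyc := hys c ⟨le_rfl, hcb⟩
    rw [h0] at hxc
    linarith
  refine ⟨contDiff_two_ite_le hx hy h0 h1 h2, fun t ht => ?_⟩
  rw [deriv_ite_le (hx.differentiable two_ne_zero) (hy.differentiable two_ne_zero) h0 h1,
    deriv_ite_le (hx.deriv'.differentiable one_ne_zero) (hy.deriv'.differentiable one_ne_zero)
      h1 h2]
  by_cases htc : t ≤ c
  · simp only [if_pos htc]
    exact hxs t ⟨ht.1, htc⟩
  · simp only [if_neg htc]
    exact hys t ⟨(not_le.mp htc).le, ht.2⟩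

lemma unique (hx : ContDiff ℝ 2 x) (hy : ContDiff ℝ 2 y)
    (hxs : SolvesOn μ ν x (Icc a b)) (hys : SolvesOn μ ν y (Icc a b)) (h0 : x a = y a)
    (h1 : deriv x a = deriv y a) : ∀ t ∈ Icc a b, x t = y t ∧ deriv x t = deriv y t := by
  set F : ℝ × ℝ → ℝ × ℝ := fun p => (p.2, ν * max (-p.1) 0 - μ * max p.1 0)
  obtain ⟨K, hK⟩ : ∃ K, LipschitzWith K F :=
    ⟨_, LipschitzWith.prod_snd.prodMk
      (((lipschitzWith_smul ν).comp (LipschitzWith.id.neg.max_const 0)).sub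
        ((lipschitzWith_smul μ).comp (LipschitzWith.id.max_const 0)) |>.comp
        LipschitzWith.prod_fst)⟩
  have hphase : ∀ z : ℝ → ℝ, ContDiff ℝ 2 z → SolvesOn μ ν z (Icc a b) →
      ∀ t ∈ Ico a b,
        HasDerivWithinAt (fun t => (z t, deriv z t)) (F (z t, deriv z t)) (Ici t) t := by
    intro z hz hzs t ht
    have hz'' : deriv (deriv z) t = ν * max (-z t) 0 - μ * max (z t) 0 := by
      linear_combination hzs t (Ico_subset_Icc_self ht)
    refine HasDerivAt.hasDerivWithinAt (((hz.differentiable two_ne_zero t).hasDerivAt).prodMk ?_)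
    rw [← hz'']
    exact (hz.deriv'.differentiable one_ne_zero t).hasDerivAt
  have hcont : ∀ z : ℝ → ℝ, ContDiff ℝ 2 z → ContinuousOn (fun t => (z t, deriv z t)) (Icc a b) :=
    fun z hz => (hz.continuous.prodMk (hz.continuous_deriv one_le_two)).continuousOn
  have := ODE_solution_unique (v := fun _ => F) (fun _ => hK) (hcont x hx) (hphase x hx hxs)
    (hcont y hy) (hphase y hy hys) (Prod.ext h0 h1)
  exact fun t ht => Prod.ext_iff.mp (this ht)

lemma eq_zero_of_deriv_eq_zero {T : ℝ} (hx : ContDiff ℝ 2 x)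
    (hs : SolvesOn μ ν x (Icc 0 T)) (h0 : x 0 = 0) (h1 : deriv x 0 = 0) :
    ∀ t ∈ Icc 0 T, x t = 0 := fun t ht =>
  (unique hx contDiff_const hs (solvesOn_zero μ ν _) h0
    (h1.trans (deriv_const 0 (0 : ℝ)).symm) t ht).1

end SolvesOn

lemma pi_div_sqrt_pos {μ : ℝ} (hμ : 0 < μ) : 0 < π / √μ :=
  div_pos pi_pos (sqrt_pos.mpr hμ)

noncomputable def sineWave (μ t : ℝ) : ℝ := sin (√μ * t) / √μ

lemma sineWave_zero (μ : ℝ) : sineWave μ 0 = 0 := by simp [sineWave]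

lemma contDiff_sineWave (μ : ℝ) : ContDiff ℝ 2 (sineWave μ) := by
  unfold sineWave
  fun_prop

section sineWave

variable {μ : ℝ}

lemma hasDerivAt_sineWave (hμ : 0 < μ) (t : ℝ) : HasDerivAt (sineWave μ) (cos (√μ * t)) t := by
  have hs : √μ ≠ 0 := (sqrt_pos.mpr hμ).ne'
  have h := (((hasDerivAt_id' t).const_mul √μ).sin).div_const √μ
  rwa [mul_one, mul_div_cancel_right₀ _ hs] at h

lemma deriv_sineWave (hμ : 0 < μ) : deriv (sineWave μ) = fun t => cos (√μ * t) :=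
  funext fun t => (hasDerivAt_sineWave hμ t).deriv

lemma deriv_deriv_sineWave (hμ : 0 < μ) :
    deriv (deriv (sineWave μ)) = fun t => -μ * sineWave μ t := by
  have hs : √μ ≠ 0 := (sqrt_pos.mpr hμ).ne'
  rw [deriv_sineWave hμ]
  funext t
  rw [(((hasDerivAt_id' t).const_mul √μ).cos).deriv, sineWave]
  field_simp
  rw [sq_sqrt hμ.le]
  ring

lemma sineWave_pi_div_sqrt (hμ : 0 < μ) : sineWave μ (π / √μ) = 0 := by
  simp [sineWave, mul_div_cancel₀ _ (sqrt_pos.mpr hμ).ne']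

lemma sineWave_pos (hμ : 0 < μ) {t : ℝ} (ht : t ∈ Ioo 0 (π / √μ)) : 0 < sineWave μ t := by
  have hs : 0 < √μ := sqrt_pos.mpr hμ
  refine div_pos (sin_pos_of_pos_of_lt_pi (by nlinarith [ht.1]) ?_) hs
  have := mul_lt_mul_of_pos_left ht.2 hs
  rwa [mul_div_cancel₀ _ hs.ne'] at this

lemma sineWave_nonneg (hμ : 0 < μ) {t : ℝ} (ht : t ∈ Icc 0 (π / √μ)) : 0 ≤ sineWave μ t := by
  rcases eq_endpoints_or_mem_Ioo_of_mem_Icc ht with rfl | rfl | ht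
  · rw [sineWave_zero]
  · rw [sineWave_pi_div_sqrt hμ]
  · exact (sineWave_pos hμ ht).le

lemma deriv_sineWave_pi_div_sqrt (hμ : 0 < μ) : deriv (sineWave μ) (π / √μ) = -1 := by
  simp [deriv_sineWave hμ, mul_div_cancel₀ _ (sqrt_pos.mpr hμ).ne']

lemma solvesOn_sineWave (hμ : 0 < μ) (ν : ℝ) : SolvesOn μ ν (sineWave μ) (Icc 0 (π / √μ)) := by
  intro t ht
  have h := sineWave_nonneg hμ ht
  rw [deriv_deriv_sineWave hμ, max_eq_left h, max_eq_right (neg_nonpos.mpr h)]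
  ring

lemma deriv_sineWave_zero (hμ : 0 < μ) : deriv (sineWave μ) 0 = 1 := by
  simp [deriv_sineWave hμ]

end sineWave

def halfWavesLength : ℕ → ℝ → ℝ → ℝ
  | 0, _, _ => 0
  | n + 1, a, b => a + halfWavesLength n b a

lemma halfWavesLength_nonneg {a b : ℝ} (ha : 0 ≤ a) (hb : 0 ≤ b) (n : ℕ) :
    0 ≤ halfWavesLength n a b := by
  induction n generalizing a b with
  | zero => exact le_rfl
  | succ n ih => exact add_nonneg ha (ih hb ha)

lemma halfWavesLength_two_mul (k : ℕ) (a b : ℝ) : halfWavesLength (2 * k) a b = k * (a + b) := by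
  induction k with
  | zero => simp [halfWavesLength]
  | succ k ih =>
    rw [show 2 * (k + 1) = 2 * k + 1 + 1 by ring, halfWavesLength, halfWavesLength, ih]
    push_cast
    ring

lemma halfWavesLength_two_mul_add_one (k : ℕ) (a b : ℝ) :
    halfWavesLength (2 * k + 1) a b = (k + 1) * a + k * b := by
  rw [halfWavesLength, halfWavesLength_two_mul]
  ring

lemma exists_halfWavesLength_iff (a b T : ℝ) :
    (∃ n, T = halfWavesLength (n + 1) a b ∨ T = halfWavesLength (n + 1) b a) ↔
      ∃ k : ℕ, T = (k + 1) * a + k * b ∨ T = k * a + (k + 1) * b ∨ T = (k + 1) * (a + b) := by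
  constructor
  · rintro ⟨n, hn⟩
    obtain ⟨k, rfl | rfl⟩ := n.even_or_odd'
    · simp only [halfWavesLength_two_mul_add_one] at hn
      exact ⟨k, hn.imp id fun h => Or.inl (h.trans (by ring))⟩
    · rw [show 2 * k + 1 + 1 = 2 * (k + 1) by ring, halfWavesLength_two_mul,
        halfWavesLength_two_mul, add_comm b a, or_self] at hn
      exact ⟨k, Or.inr (Or.inr (by rw [hn]; push_cast; ring))⟩
  · rintro ⟨k, h | h | h⟩
    · exact ⟨2 * k, Or.inl (by rw [halfWavesLength_two_mul_add_one, h])⟩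
    · exact ⟨2 * k, Or.inr (by rw [halfWavesLength_two_mul_add_one, h]; ring)⟩
    · refine ⟨2 * k + 1, Or.inl ?_⟩
      rw [show 2 * k + 1 + 1 = 2 * (k + 1) by ring, halfWavesLength_two_mul, h]
      push_cast
      ring

lemma SolvesOn.halfWave {μ ν T : ℝ} {x : ℝ → ℝ} (hμ : 0 < μ) (hx : ContDiff ℝ 2 x)
    (hs : SolvesOn μ ν x (Icc 0 T)) (h0 : x 0 = 0) (h1 : 0 < deriv x 0) (hT : 0 < T)
    (hxT : x T = 0) :
    π / √μ ≤ T ∧ x (π / √μ) = 0 ∧ deriv x (π / √μ) = -deriv x 0 := by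
  set m := deriv x 0
  have hA : 0 < π / √μ := pi_div_sqrt_pos hμ
  have hw : ∀ t ∈ Icc 0 (min T (π / √μ)), x t = m * sineWave μ t ∧
      deriv x t = deriv (fun u => m * sineWave μ u) t := by
    refine SolvesOn.unique hx (contDiff_const.mul (contDiff_sineWave μ))
      (hs.mono (Icc_subset_Icc_right (min_le_left _ _)))
      (((solvesOn_sineWave hμ ν).const_mul h1.le).mono (Icc_subset_Icc_right (min_le_right _ _)))
      (by rw [h0, sineWave_zero, mul_zero]) ?_
    rw [deriv_const_mul_field, deriv_sineWave_zero hμ, mul_one]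
  have hAT : π / √μ ≤ T := by
    by_contra! hTA
    have := (hw T ⟨hT.le, le_min le_rfl hTA.le⟩).1
    rw [hxT] at this
    exact (mul_pos h1 (sineWave_pos hμ ⟨hT, hTA⟩)).ne this
  obtain ⟨hxA, hdA⟩ := hw (π / √μ) ⟨hA.le, le_min hAT le_rfl⟩
  rw [deriv_const_mul_field, deriv_sineWave_pi_div_sqrt hμ] at hdA
  rw [sineWave_pi_div_sqrt hμ] at hxA
  exact ⟨hAT, by rw [hxA, mul_zero], by rw [hdA, mul_neg_one]⟩

lemma SolvesOn.exists_eq_halfWavesLength {μ ν T : ℝ} {x : ℝ → ℝ} (hμ : 0 < μ) (hν : 0 < ν)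
    (hx : ContDiff ℝ 2 x) (hs : SolvesOn μ ν x (Icc 0 T)) (h0 : x 0 = 0) (h1 : 0 < deriv x 0)
    (hT : 0 < T) (hxT : x T = 0) : ∃ n, T = halfWavesLength (n + 1) (π / √μ) (π / √ν) := by
  obtain ⟨N, hN⟩ := exists_nat_ge (T / min (π / √μ) (π / √ν))
  rw [div_le_iff₀ (lt_min (pi_div_sqrt_pos hμ) (pi_div_sqrt_pos hν))] at hN
  induction N generalizing μ ν T x with
  | zero => rw [Nat.cast_zero, zero_mul] at hN; linarith
  | succ N ih =>
    obtain ⟨hAT, hxA, hdA⟩ := hs.halfWave hμ hx h0 h1 hT hxT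
    rcases hAT.eq_or_lt with hTA | hAT
    · exact ⟨0, by simp [halfWavesLength, hTA]⟩
    set A := π / √μ
    have hy : SolvesOn ν μ (fun t => -x (t + A)) (Icc 0 (T - A)) := by
      have := (hs.comp_add_const A).neg
      rw [preimage_add_const_Icc] at this
      exact this.mono (Icc_subset_Icc_left (by linarith [pi_div_sqrt_pos hμ]))
    obtain ⟨n, hn⟩ := ih hν hμ (hx.comp (contDiff_id.add contDiff_const)).neg hy
      (by simp [hxA]) (by simp [deriv_comp_add_const, hdA, h1]) (by linarith)
      (by simp [hxT]) (by push_cast at hN; rw [min_comm]; nlinarith [min_le_left A (π / √ν)])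
    exact ⟨n + 1, by rw [halfWavesLength, ← hn]; ring⟩

lemma SolvesOn.exists_halfWavesLength_of_nontrivial {μ ν T : ℝ} {x : ℝ → ℝ} (hμ : 0 < μ)
    (hν : 0 < ν) (hx : ContDiff ℝ 2 x) (hs : SolvesOn μ ν x (Icc 0 T)) (h0 : x 0 = 0)
    (hxT : x T = 0) (hne : ∃ t ∈ Icc 0 T, x t ≠ 0) :
    ∃ n, T = halfWavesLength (n + 1) (π / √μ) (π / √ν) ∨
      T = halfWavesLength (n + 1) (π / √ν) (π / √μ) := by
  obtain ⟨t, ht, hxt⟩ := hne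
  have hT : 0 < T := (ht.1.lt_of_ne fun h => hxt (h ▸ h0)).trans_le ht.2
  have hd : deriv x 0 ≠ 0 := fun h1 => hxt (hs.eq_zero_of_deriv_eq_zero hx h0 h1 t ht)
  rcases hd.lt_or_gt with hneg | hpos
  · obtain ⟨n, hn⟩ := hs.neg.exists_eq_halfWavesLength hν hμ hx.neg (by simp [h0])
      (by simpa using hneg) hT (by simp [hxT])
    exact ⟨n, Or.inr hn⟩
  · exact (hs.exists_eq_halfWavesLength hμ hν hx h0 hpos hT hxT).imp fun _ => Or.inl

lemma exists_solvesOn_halfWavesLength {μ ν : ℝ} (hμ : 0 < μ) (hν : 0 < ν) (n : ℕ) :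
    ∃ x : ℝ → ℝ, ContDiff ℝ 2 x ∧
      SolvesOn μ ν x (Icc 0 (halfWavesLength n (π / √μ) (π / √ν))) ∧ x 0 = 0 ∧
      deriv x 0 = 1 ∧ x (halfWavesLength n (π / √μ) (π / √ν)) = 0 := by
  induction n generalizing μ ν with
  | zero =>
    refine ⟨sineWave μ, contDiff_sineWave μ, (solvesOn_sineWave hμ ν).mono ?_, sineWave_zero μ,
      deriv_sineWave_zero hμ, sineWave_zero μ⟩
    exact Icc_subset_Icc_right (pi_div_sqrt_pos hμ).le
  | succ n ih =>
    obtain ⟨x, hx, hs, h0, h1, hL⟩ := ih hν hμ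
    have hwA := sineWave_pi_div_sqrt hμ
    have hw'A := deriv_sineWave_pi_div_sqrt hμ
    set A := π / √μ
    set L := halfWavesLength n (π / √ν) A
    have hA : 0 < A := pi_div_sqrt_pos hμ
    have hL0 : 0 ≤ L := halfWavesLength_nonneg (pi_div_sqrt_pos hν).le hA.le n
    set y := fun t => -x (t + -A)
    have hy : ContDiff ℝ 2 y := (hx.comp (contDiff_id.add contDiff_const)).neg
    have hys : SolvesOn μ ν y (Icc A (A + L)) := by
      have := (hs.comp_add_const (-A)).neg
      rwa [preimage_add_const_Icc, sub_neg_eq_add, sub_neg_eq_add, zero_add, add_comm L] at this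
    have hy0 : sineWave μ A = y A := by simp [y, hwA, h0]
    have hy1 : deriv (sineWave μ) A = deriv y A := by
      simp [y, deriv_comp_add_const, hw'A, h1]
    have hend : halfWavesLength (n + 1) A (π / √ν) = A + L := rfl
    obtain ⟨hC, hsol⟩ := SolvesOn.ite_le (contDiff_sineWave μ) hy hA.le (by linarith)
      (solvesOn_sineWave hμ ν) hys hy0 hy1
    refine ⟨_, hC, hend ▸ hsol, by simp [hA.le, sineWave_zero], ?_, ?_⟩
    · rw [deriv_ite_le ((contDiff_sineWave μ).differentiable two_ne_zero)
        (hy.differentiable two_ne_zero) hy0 hy1]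
      simp [hA.le, deriv_sineWave_zero hμ]
    · rw [hend]
      split_ifs with hLA
      · rwa [show A + L = A by linarith]
      · simp [y, hL]

lemma exists_nontrivial_solvesOn_halfWavesLength {μ ν : ℝ} (hμ : 0 < μ) (hν : 0 < ν) (n : ℕ) :
    ∃ x : ℝ → ℝ, ContDiff ℝ 2 x ∧
      SolvesOn μ ν x (Icc 0 (halfWavesLength (n + 1) (π / √μ) (π / √ν))) ∧ x 0 = 0 ∧
      x (halfWavesLength (n + 1) (π / √μ) (π / √ν)) = 0 ∧
      ∃ t ∈ Icc 0 (halfWavesLength (n + 1) (π / √μ) (π / √ν)), x t ≠ 0 := by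
  obtain ⟨x, hx, hs, h0, h1, hL⟩ := exists_solvesOn_halfWavesLength hμ hν (n + 1)
  have hA : 0 < π / √μ := pi_div_sqrt_pos hμ
  have hL0 := halfWavesLength_nonneg (pi_div_sqrt_pos hν).le hA.le n
  refine ⟨x, hx, hs, h0, hL, exists_mem_Icc_ne_zero_of_deriv_ne_zero ?_
    (hx.differentiable two_ne_zero 0) (by rw [h1]; exact one_ne_zero)⟩
  rw [halfWavesLength]
  linarith

theorem dirichlet_resonance_iff_general (μ ν T : ℝ) (hμ : 0 < μ) (hν : 0 < ν) :
    (∃ x : ℝ → ℝ, ContDiff ℝ 2 x ∧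
        (∀ t ∈ Set.Icc 0 T,
          deriv (deriv x) t + μ * max (x t) 0 - ν * max (-(x t)) 0 = 0) ∧
        x 0 = 0 ∧ x T = 0 ∧ ∃ t ∈ Set.Icc 0 T, x t ≠ 0) ↔
      ∃ k : ℕ,
        T = Real.pi * ((k + 1) / Real.sqrt μ + k / Real.sqrt ν) ∨
        T = Real.pi * (k / Real.sqrt μ + (k + 1) / Real.sqrt ν) ∨
        T = Real.pi * (k + 1) * (1 / Real.sqrt μ + 1 / Real.sqrt ν) := by
  have hforms : ∀ k : ℝ,
      π * ((k + 1) / √μ + k / √ν) = (k + 1) * (π / √μ) + k * (π / √ν) ∧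
      π * (k / √μ + (k + 1) / √ν) = k * (π / √μ) + (k + 1) * (π / √ν) ∧
      π * (k + 1) * (1 / √μ + 1 / √ν) = (k + 1) * (π / √μ + π / √ν) :=
    fun k => ⟨by ring, by ring, by ring⟩
  simp only [hforms, ← exists_halfWavesLength_iff]
  constructor
  · rintro ⟨x, hx, hs, h0, hxT, hne⟩
    exact SolvesOn.exists_halfWavesLength_of_nontrivial hμ hν hx hs h0 hxT hne
  · rintro ⟨n, rfl | rfl⟩
    · exact exists_nontrivial_solvesOn_halfWavesLength hμ hν n
    · obtain ⟨x, hx, hs, h0, hL, t, ht, hxt⟩ := exists_nontrivial_solvesOn_halfWavesLength hν hμ n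
      exact ⟨fun t => -x t, hx.neg, hs.neg, by simp [h0], by simp [hL], t, ht, neg_ne_zero.mpr hxt⟩

/-- The Dirichlet problem `x'' + μx⁺ − νx⁻ = 0`, `x(0) = 0 = x(T)` admits a nontrivial
solution iff `T = π[(k+1)/√μ + k/√ν]`, or `T = π[k/√μ + (k+1)/√ν]`, or
`T = π(k+1)[1/√μ + 1/√ν]` for some `k ∈ ℕ`. -/
theorem dirichlet_resonance_iff (μ ν T : ℝ) (hμ : 0 < μ) (hν : 0 < ν) (hT : 0 < T) :
    (∃ x : ℝ → ℝ, ContDiff ℝ 2 x ∧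
        (∀ t ∈ Set.Icc 0 T,
          deriv (deriv x) t + μ * max (x t) 0 - ν * max (-(x t)) 0 = 0) ∧
        x 0 = 0 ∧ x T = 0 ∧ ∃ t ∈ Set.Icc 0 T, x t ≠ 0) ↔
      ∃ k : ℕ,
        T = Real.pi * ((k + 1) / Real.sqrt μ + k / Real.sqrt ν) ∨
        T = Real.pi * (k / Real.sqrt μ + (k + 1) / Real.sqrt ν) ∨
        T = Real.pi * (k + 1) * (1 / Real.sqrt μ + 1 / Real.sqrt ν) :=
  dirichlet_resonance_iff_general μ ν T hμ hν
end

section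
/- Let μ₁ ≤ μ₂ and ν₁ ≤ ν₂ be positive reals and f : [0,T] × ℝ → ℝ continuous, satisfying ν₁ ≤ liminf_{x→−∞} f(t,x)/x ≤ limsup_{x→−∞} f(t,x)/x ≤ ν₂ and μ₁ ≤ liminf_{x→+∞} f(t,x)/x ≤ limsup_{x→+∞} f(t,x)/x ≤ μ₂, uniformly in t. Then f can be decomposed as f(t,x) = (1−γ(t,x))(μ₁x⁺ − ν₁x⁻) + γ(t,x)(μ₂x⁺ − ν₂x⁻) + q(t,x), where γ : [0,T]×ℝ → [0,1] and q satisfies lim_{|x|→∞} q(t,x)/x = 0 uniformly in t. -/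
lemma clamp_key (a b F E : ℝ) (hE : 0 ≤ E) (h1 : min a b - E ≤ F) (h2 : F ≤ max a b + E) :
    |F - (a + (max 0 (min 1 ((F - a) / (b - a)))) * (b - a))| ≤ E := by
  rcases eq_or_ne b a with hba | hba
  · subst hba
    simp only [min_self, max_self] at h1 h2
    simp only [sub_self, mul_zero, add_zero]
    rw [abs_le]
    constructor <;> linarith
  · have hd : b - a ≠ 0 := sub_ne_zero.mpr hba
    set r := (F - a) / (b - a) with hrdef
    have hr : F - a = r * (b - a) := (div_mul_cancel₀ _ hd).symm
    rcases le_total r 0 with hr0 | hr0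
    · have hc : max 0 (min 1 r) = 0 := by
        rw [max_eq_left]; exact le_trans (min_le_right _ _) hr0
      rw [hc, zero_mul, add_zero, abs_le]
      rcases lt_or_gt_of_ne (sub_ne_zero.mp hd) with hlt | hgt
      · -- b < a
        have hmax : max a b = a := max_eq_left hlt.le
        have : F - a ≥ 0 := by nlinarith
        constructor <;> nlinarith [max_eq_left hlt.le]
      · -- b > a
        have hmin : min a b = a := min_eq_left hgt.le
        have : F - a ≤ 0 := by nlinarith
        constructor <;> nlinarith
    · rcases le_total r 1 with hr1 | hr1
      · have hc : max 0 (min 1 r) = r := by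
          rw [min_eq_right hr1, max_eq_right hr0]
        rw [hc, ← hr]
        simp [hE]
      · have hc : max 0 (min 1 r) = 1 := by
          rw [min_eq_left hr1]; simp
        rw [hc, one_mul, abs_le]
        have hFb : F - b = (r - 1) * (b - a) := by nlinarith
        rcases lt_or_gt_of_ne (sub_ne_zero.mp hd) with hlt | hgt
        · have hmin : min a b = b := min_eq_right hlt.le
          have : F - b ≤ 0 := by nlinarith
          constructor <;> nlinarith
        · have hmax : max a b = b := max_eq_right hgt.le
          have : F - b ≥ 0 := by nlinarith
          constructor <;> nlinarith

/-- A nonlinearity `f` with asymmetric asymptotic behaviour between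
`(μ₁,ν₁)` and `(μ₂,ν₂)` decomposes as
`f(t,x) = (1−γ)(μ₁x⁺ − ν₁x⁻) + γ(μ₂x⁺ − ν₂x⁻) + q(t,x)` with `γ ∈ [0,1]` and
`q` sublinear: `lim_{|x|→∞} q(t,x)/x = 0` uniformly in `t`. -/
theorem asymmetric_decomposition (T : ℝ) (hT : 0 < T)
    (μ₁ μ₂ ν₁ ν₂ : ℝ)
    (hμ : 0 < μ₁) (hμ' : μ₁ ≤ μ₂) (hν : 0 < ν₁) (hν' : ν₁ ≤ ν₂)
    (f : ℝ → ℝ → ℝ) (hf : Continuous fun p : ℝ × ℝ => f p.1 p.2)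
    (hasym : ∀ ε > (0:ℝ), ∃ R > (0:ℝ), ∀ t ∈ Set.Icc 0 T,
      (∀ x : ℝ, x ≤ -R → ν₁ - ε ≤ f t x / x ∧ f t x / x ≤ ν₂ + ε) ∧
      (∀ x : ℝ, R ≤ x → μ₁ - ε ≤ f t x / x ∧ f t x / x ≤ μ₂ + ε)) :
    ∃ γ q : ℝ → ℝ → ℝ,
      (∀ t x, γ t x ∈ Set.Icc (0:ℝ) 1) ∧
      (∀ t x, f t x =
        (1 - γ t x) * (μ₁ * max x 0 - ν₁ * max (-x) 0) +
          γ t x * (μ₂ * max x 0 - ν₂ * max (-x) 0) + q t x) ∧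
      ∀ ε > (0:ℝ), ∃ R > (0:ℝ), ∀ t ∈ Set.Icc 0 T, ∀ x : ℝ,
        R ≤ |x| → |q t x| ≤ ε * |x| := by
  set g : ℝ → ℝ := fun x => μ₁ * max x 0 - ν₁ * max (-x) 0 with hg
  set h : ℝ → ℝ := fun x => μ₂ * max x 0 - ν₂ * max (-x) 0 with hh
  refine ⟨fun t x => max 0 (min 1 ((f t x - g x) / (h x - g x))),
    fun t x => f t x - (g x + (max 0 (min 1 ((f t x - g x) / (h x - g x)))) * (h x - g x)),
    fun t x => ⟨le_max_left _ _, max_le (by norm_num) (min_le_left _ _)⟩, fun t x => by ring,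
    ?_⟩
  intro ε hε
  obtain ⟨R, hR, hRprop⟩ := hasym ε hε
  refine ⟨R, hR, fun t ht x hx => ?_⟩
  obtain ⟨hneg, hpos⟩ := hRprop t ht
  rcases le_total 0 x with hx0 | hx0
  · -- x ≥ R > 0
    rw [abs_of_nonneg hx0] at hx
    have hxpos : 0 < x := lt_of_lt_of_le hR hx
    obtain ⟨hl, hu⟩ := hpos x hx
    have hgx : g x = μ₁ * x := by
      simp only [hg]
      rw [max_eq_left hx0, max_eq_right (by linarith)]
      ring
    have hhx : h x = μ₂ * x := by
      simp only [hh]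
      rw [max_eq_left hx0, max_eq_right (by linarith)]
      ring
    simp only [hgx, hhx, abs_of_nonneg hx0]
    have hfl : (μ₁ - ε) * x ≤ f t x := by
      have := (div_le_iff₀ hxpos).mp hu
      have := (le_div_iff₀ hxpos).mp hl
      linarith
    have hfu : f t x ≤ (μ₂ + ε) * x := (div_le_iff₀ hxpos).mp hu
    have hmin : min (μ₁ * x) (μ₂ * x) = μ₁ * x :=
      min_eq_left (by nlinarith)
    have hmax : max (μ₁ * x) (μ₂ * x) = μ₂ * x :=
      max_eq_right (by nlinarith)
    exact clamp_key (μ₁ * x) (μ₂ * x) (f t x) (ε * x) (by positivity)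
      (by rw [hmin]; linarith) (by rw [hmax]; linarith)
  · -- x ≤ -R < 0
    rw [abs_of_nonpos hx0] at hx
    have hxneg : x < 0 := by linarith
    obtain ⟨hl, hu⟩ := hneg x (by linarith)
    have hgx : g x = ν₁ * x := by
      simp only [hg]
      rw [max_eq_right hx0, max_eq_left (by linarith)]
      ring
    have hhx : h x = ν₂ * x := by
      simp only [hh]
      rw [max_eq_right hx0, max_eq_left (by linarith)]
      ring
    simp only [hgx, hhx, abs_of_nonpos hx0]
    have hfl : (ν₂ + ε) * x ≤ f t x := by
      have := (div_le_iff_of_neg hxneg).mp hu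
      linarith
    have hfu : f t x ≤ (ν₁ - ε) * x := by
      have := (le_div_iff_of_neg hxneg).mp hl
      linarith
    have hmin : min (ν₁ * x) (ν₂ * x) = ν₂ * x :=
      min_eq_right (by nlinarith)
    have hmax : max (ν₁ * x) (ν₂ * x) = ν₁ * x :=
      max_eq_left (by nlinarith)
    exact clamp_key (ν₁ * x) (ν₂ * x) (f t x) (ε * (-x)) (by nlinarith)
      (by rw [hmin]; nlinarith) (by rw [hmax]; nlinarith)
end

section
/- Let μ, ν > 0 and T > 0 satisfy T < π/√μ and T < π/√ν. Then for any continuous bounded e : [0,T] → ℝ, the Dirichlet problem x'' + μx⁺ − νx⁻ = e(t), x(0) = 0 = x(T), admits at least one solution. -/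
open Set Real intervalIntegral Function

namespace DNFAux

noncomputable section

/-- The Fučík nonlinearity. -/
def G (μ ν x : ℝ) : ℝ := μ * max x 0 - ν * max (-x) 0

lemma G_cont (μ ν : ℝ) : Continuous (fun x => G μ ν x) := by
  unfold G; fun_prop

lemma G_lip {μ ν : ℝ} (hμ : 0 ≤ μ) (hν : 0 ≤ ν) (x y : ℝ) :
    |G μ ν x - G μ ν y| ≤ (μ + ν) * |x - y| := by
  have h1 : |max x 0 - max y 0| ≤ |x - y| := abs_max_sub_max_le_abs x y 0
  have h2 : |max (-x) 0 - max (-y) 0| ≤ |x - y| := by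
    have := abs_max_sub_max_le_abs (-x) (-y) 0
    calc |max (-x) 0 - max (-y) 0| ≤ |(-x) - (-y)| := this
      _ = |x - y| := by rw [neg_sub_neg, abs_sub_comm]
  have : G μ ν x - G μ ν y = μ * (max x 0 - max y 0) - ν * (max (-x) 0 - max (-y) 0) := by
    unfold G; ring
  rw [this]
  calc |μ * (max x 0 - max y 0) - ν * (max (-x) 0 - max (-y) 0)|
      ≤ |μ * (max x 0 - max y 0)| + |ν * (max (-x) 0 - max (-y) 0)| := abs_sub _ _
    _ = μ * |max x 0 - max y 0| + ν * |max (-x) 0 - max (-y) 0| := by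
        rw [abs_mul, abs_mul, abs_of_nonneg hμ, abs_of_nonneg hν]
    _ ≤ μ * |x - y| + ν * |x - y| := by
        gcongr
    _ = (μ + ν) * |x - y| := by ring

lemma G_of_nonneg {μ ν x : ℝ} (hx : 0 ≤ x) : G μ ν x = μ * x := by
  unfold G; rw [max_eq_left hx, max_eq_right (neg_nonpos.mpr hx), mul_zero, sub_zero]

lemma G_of_nonpos {μ ν x : ℝ} (hx : x ≤ 0) : G μ ν x = ν * x := by
  unfold G
  rw [max_eq_right hx, max_eq_left (neg_nonneg.mpr hx), mul_zero, zero_sub, mul_neg, neg_neg]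

variable {μ ν T : ℝ}

/-- The Picard integral operator for the system `x' = y, y' = E t - G μ ν x`
with initial condition `(0, s)` at time `0`, on `C(Icc 0 T, ℝ × ℝ)`. -/
def P (μ ν : ℝ) {T : ℝ} (hT : (0:ℝ) ≤ T) {E : ℝ → ℝ} (hE : Continuous E) (s : ℝ)
    (u : C(Icc (0:ℝ) T, ℝ × ℝ)) : C(Icc (0:ℝ) T, ℝ × ℝ) :=
  ⟨fun t => (∫ τ in (0:ℝ)..(t:ℝ), (u (projIcc 0 T hT τ)).2,
     s + ∫ τ in (0:ℝ)..(t:ℝ), (E τ - G μ ν (u (projIcc 0 T hT τ)).1)),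
   by
     have h1 : Continuous fun τ : ℝ => (u (projIcc 0 T hT τ)).2 :=
       continuous_snd.comp (u.continuous.comp continuous_projIcc)
     have h2 : Continuous fun τ : ℝ => E τ - G μ ν (u (projIcc 0 T hT τ)).1 :=
       hE.sub ((G_cont μ ν).comp (continuous_fst.comp (u.continuous.comp continuous_projIcc)))
     exact ((intervalIntegral.continuous_primitive
         (fun a b => h1.intervalIntegrable a b) 0).comp continuous_subtype_val).prodMk
       ((continuous_const.add ((intervalIntegral.continuous_primitive
         (fun a b => h2.intervalIntegrable a b) 0).comp continuous_subtype_val)))⟩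

lemma P_apply (hT : (0:ℝ) ≤ T) {E : ℝ → ℝ} (hE : Continuous E) (s : ℝ)
    (u : C(Icc (0:ℝ) T, ℝ × ℝ)) (t : Icc (0:ℝ) T) :
    P μ ν hT hE s u t = (∫ τ in (0:ℝ)..(t:ℝ), (u (projIcc 0 T hT τ)).2,
      s + ∫ τ in (0:ℝ)..(t:ℝ), (E τ - G μ ν (u (projIcc 0 T hT τ)).1)) := rfl


lemma P_iter_pointwise (hμ : 0 ≤ μ) (hν : 0 ≤ ν) (hT : (0:ℝ) ≤ T)
    {E : ℝ → ℝ} (hE : Continuous E) (s : ℝ) :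
    ∀ (k : ℕ) (u w : C(Icc (0:ℝ) T, ℝ × ℝ)) (t : Icc (0:ℝ) T),
      dist ((P μ ν hT hE s)^[k] u t) ((P μ ν hT hE s)^[k] w t)
        ≤ (1 + μ + ν)^k * (t:ℝ)^k / (Nat.factorial k) * dist u w := by
  intro k
  induction k with
  | zero =>
    intro u w t
    simpa using ContinuousMap.dist_apply_le_dist t
  | succ k ih =>
    intro u w t
    set L : ℝ := 1 + μ + ν with hLdef
    have hL1 : 1 ≤ L := by simp only [hLdef]; linarith
    have hL0 : 0 ≤ L := by linarith
    set Φ := P μ ν hT hE s with hΦ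
    have hiter : ∀ v : C(Icc (0:ℝ) T, ℝ × ℝ), Φ^[k+1] v = Φ (Φ^[k] v) :=
      fun v => Function.iterate_succ_apply' _ _ _
    rw [hiter u, hiter w]
    set u' := Φ^[k] u with hu'
    set w' := Φ^[k] w with hw'
    set d := dist u w with hd
    have hd0 : 0 ≤ d := dist_nonneg
    have ht0 : (0:ℝ) ≤ (t:ℝ) := t.2.1
    have htT : (t:ℝ) ≤ T := t.2.2
    have hkfac : (0:ℝ) < (Nat.factorial k : ℝ) := by
      exact_mod_cast Nat.factorial_pos k
    have key : ∀ τ ∈ Icc (0:ℝ) (t:ℝ),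
        dist (u' (projIcc 0 T hT τ)) (w' (projIcc 0 T hT τ))
          ≤ L^k * τ^k / (Nat.factorial k) * d := by
      intro τ hτ
      have hτIcc : τ ∈ Icc (0:ℝ) T := ⟨hτ.1, hτ.2.trans htT⟩
      have h := ih u w (projIcc 0 T hT τ)
      rw [projIcc_of_mem hT hτIcc] at h ⊢
      simpa using h
    have hcu1 : Continuous fun τ : ℝ => (u' (projIcc 0 T hT τ)).2 :=
      continuous_snd.comp (u'.continuous.comp continuous_projIcc)
    have hcw1 : Continuous fun τ : ℝ => (w' (projIcc 0 T hT τ)).2 :=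
      continuous_snd.comp (w'.continuous.comp continuous_projIcc)
    have hcu2 : Continuous fun τ : ℝ => E τ - G μ ν (u' (projIcc 0 T hT τ)).1 :=
      hE.sub ((G_cont μ ν).comp (continuous_fst.comp (u'.continuous.comp continuous_projIcc)))
    have hcw2 : Continuous fun τ : ℝ => E τ - G μ ν (w' (projIcc 0 T hT τ)).1 :=
      hE.sub ((G_cont μ ν).comp (continuous_fst.comp (w'.continuous.comp continuous_projIcc)))
    -- a generic bound for each component
    have main : ∀ f g : ℝ → ℝ, Continuous f → Continuous g →
        (∀ τ ∈ Icc (0:ℝ) (t:ℝ), |f τ - g τ| ≤ L^(k+1) * τ^k * (d / (Nat.factorial k))) →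
        |(∫ τ in (0:ℝ)..(t:ℝ), f τ) - ∫ τ in (0:ℝ)..(t:ℝ), g τ|
          ≤ L^(k+1) * (t:ℝ)^(k+1) / (Nat.factorial (k+1)) * d := by
      intro f g hf hg hfg
      rw [← intervalIntegral.integral_sub (hf.intervalIntegrable 0 t)
        (hg.intervalIntegrable 0 t)]
      have step1 := intervalIntegral.abs_integral_le_integral_abs
        (f := fun τ => f τ - g τ) (μ := MeasureTheory.volume) ht0
      refine step1.trans ?_
      have hB : Continuous fun τ : ℝ => L^(k+1) * τ^k * (d / (Nat.factorial k)) := by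
        fun_prop
      have step2 := intervalIntegral.integral_mono_on (μ := MeasureTheory.volume) ht0
        ((hf.sub hg).abs.intervalIntegrable 0 t) (hB.intervalIntegrable 0 t) hfg
      refine step2.trans ?_
      have hrw : (fun τ : ℝ => L^(k+1) * τ^k * (d / (Nat.factorial k)))
          = fun τ : ℝ => (L^(k+1) * (d / (Nat.factorial k))) * τ^k := by
        ext τ; ring
      rw [hrw, intervalIntegral.integral_const_mul, integral_pow]
      have hfac : (Nat.factorial (k+1) : ℝ) = ((k:ℝ)+1) * (Nat.factorial k : ℝ) := by
        push_cast [Nat.factorial_succ]; ring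
      rw [hfac]
      have hk1 : (0:ℝ) < (k:ℝ) + 1 := by positivity
      field_simp
      apply le_of_eq
      ring
    rw [hΦ, P_apply, P_apply, Prod.dist_eq]
    apply max_le
    · refine le_of_eq_of_le (Real.dist_eq _ _) ?_
      apply main _ _ hcu1 hcw1
      intro τ hτ
      have h := key τ hτ
      have hτ0 : 0 ≤ τ := hτ.1
      calc |(u' (projIcc 0 T hT τ)).2 - (w' (projIcc 0 T hT τ)).2|
          = dist (u' (projIcc 0 T hT τ)).2 (w' (projIcc 0 T hT τ)).2 := (Real.dist_eq _ _).symm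
        _ ≤ dist (u' (projIcc 0 T hT τ)) (w' (projIcc 0 T hT τ)) := by
            rw [Prod.dist_eq]; exact le_max_right _ _
        _ ≤ L^k * τ^k / (Nat.factorial k) * d := h
        _ ≤ L^(k+1) * τ^k * (d / (Nat.factorial k)) := by
            have hLpow : L^k ≤ L^(k+1) := pow_le_pow_right₀ hL1 (Nat.le_succ k)
            have hτk : (0:ℝ) ≤ τ^k := pow_nonneg hτ0 k
            rw [div_mul_eq_mul_div, mul_div_assoc]
            gcongr
    · rw [dist_add_left]
      refine le_of_eq_of_le (Real.dist_eq _ _) ?_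
      apply main _ _ hcu2 hcw2
      intro τ hτ
      have h := key τ hτ
      have hτ0 : 0 ≤ τ := hτ.1
      have hGd : |(E τ - G μ ν (u' (projIcc 0 T hT τ)).1)
          - (E τ - G μ ν (w' (projIcc 0 T hT τ)).1)|
          = |G μ ν (w' (projIcc 0 T hT τ)).1 - G μ ν (u' (projIcc 0 T hT τ)).1| := by
        ring_nf
      rw [hGd]
      calc |G μ ν (w' (projIcc 0 T hT τ)).1 - G μ ν (u' (projIcc 0 T hT τ)).1|
          ≤ (μ + ν) * |(w' (projIcc 0 T hT τ)).1 - (u' (projIcc 0 T hT τ)).1| :=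
            G_lip hμ hν _ _
        _ = (μ + ν) * dist (u' (projIcc 0 T hT τ)).1 (w' (projIcc 0 T hT τ)).1 := by
            rw [Real.dist_eq, abs_sub_comm]
        _ ≤ (μ + ν) * dist (u' (projIcc 0 T hT τ)) (w' (projIcc 0 T hT τ)) := by
            have : dist (u' (projIcc 0 T hT τ)).1 (w' (projIcc 0 T hT τ)).1
                ≤ dist (u' (projIcc 0 T hT τ)) (w' (projIcc 0 T hT τ)) := by
              rw [Prod.dist_eq]; exact le_max_left _ _
            have hμν : 0 ≤ μ + ν := by linarith
            exact mul_le_mul_of_nonneg_left this hμν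
        _ ≤ (μ + ν) * (L^k * τ^k / (Nat.factorial k) * d) := by
            have hμν : 0 ≤ μ + ν := by linarith
            exact mul_le_mul_of_nonneg_left (key τ hτ) hμν
        _ ≤ L^(k+1) * τ^k * (d / (Nat.factorial k)) := by
            have hμνL : μ + ν ≤ L := by simp only [hLdef]; linarith
            have hLk : (0:ℝ) ≤ L^k := pow_nonneg hL0 k
            have hτk : (0:ℝ) ≤ τ^k := pow_nonneg hτ0 k
            have : (μ + ν) * (L^k * τ^k / (Nat.factorial k) * d)
                = ((μ + ν) * L^k) * τ^k * (d / (Nat.factorial k)) := by ring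
            rw [this, pow_succ]
            have h2 : (μ + ν) * L^k ≤ L^k * L := by
              rw [mul_comm (L^k) L]; exact mul_le_mul_of_nonneg_right hμνL hLk
            gcongr

lemma P_iter_dist (hμ : 0 ≤ μ) (hν : 0 ≤ ν) (hT : (0:ℝ) ≤ T)
    {E : ℝ → ℝ} (hE : Continuous E) (s : ℝ) (k : ℕ) (u w : C(Icc (0:ℝ) T, ℝ × ℝ)) :
    dist ((P μ ν hT hE s)^[k] u) ((P μ ν hT hE s)^[k] w)
      ≤ ((1 + μ + ν) * T)^k / (Nat.factorial k) * dist u w := by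
  have hL0 : (0:ℝ) ≤ 1 + μ + ν := by linarith
  have hfac : (0:ℝ) < (Nat.factorial k : ℝ) := by exact_mod_cast Nat.factorial_pos k
  have hC : (0:ℝ) ≤ ((1 + μ + ν) * T)^k / (Nat.factorial k) * dist u w := by
    apply mul_nonneg (div_nonneg (pow_nonneg (mul_nonneg hL0 hT) k) hfac.le) dist_nonneg
  rw [ContinuousMap.dist_le hC]
  intro t
  refine (P_iter_pointwise hμ hν hT hE s k u w t).trans ?_
  rw [mul_pow]
  have ht0 : (0:ℝ) ≤ (t:ℝ) := t.2.1
  have htT : (t:ℝ) ≤ T := t.2.2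
  have htk : (t:ℝ)^k ≤ T^k := pow_le_pow_left₀ ht0 htT k
  gcongr

lemma exists_fixedPoint {α : Type*} [MetricSpace α] [CompleteSpace α] [Nonempty α]
    (f : α → α) (n : ℕ) (c : ℝ) (hc0 : 0 ≤ c) (hc : c < 1)
    (h : ∀ a b, dist (f^[n] a) (f^[n] b) ≤ c * dist a b) : ∃ u, f u = u := by
  have hl : LipschitzWith ⟨c, hc0⟩ (f^[n]) := LipschitzWith.of_dist_le_mul h
  have hC : ContractingWith ⟨c, hc0⟩ (f^[n]) := ⟨by exact_mod_cast hc, hl⟩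
  set p := ContractingWith.fixedPoint (f^[n]) hC with hp
  have hfix : f^[n] p = p := hC.fixedPoint_isFixedPt
  refine ⟨p, ?_⟩
  have h2 : f^[n] (f p) = f p := by
    rw [← Function.iterate_succ_apply, Function.iterate_succ_apply', hfix]
  have h3 := h (f p) p
  rw [h2, hfix] at h3
  have h4 : dist (f p) p ≤ 0 := by nlinarith [dist_nonneg (x := f p) (y := p)]
  exact dist_le_zero.mp h4

lemma dist_fixedPoints {α : Type*} [MetricSpace α] (f g : α → α) (A ε c : ℝ)
    (hA : 0 ≤ A) (hε : 0 ≤ ε)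
    (hf : ∀ a b, dist (f a) (f b) ≤ A * dist a b)
    (hfg : ∀ w, dist (f w) (g w) ≤ ε) (n : ℕ) (hc : c < 1)
    (hfn : ∀ a b, dist (f^[n] a) (f^[n] b) ≤ c * dist a b)
    {u z : α} (hu : f u = u) (hz : g z = z) :
    dist u z ≤ ε * (∑ i ∈ Finset.range n, A^i) / (1 - c) := by
  have key : ∀ (k : ℕ) (w : α),
      dist (f^[k] w) (g^[k] w) ≤ ε * ∑ i ∈ Finset.range k, A^i := by
    intro k
    induction k with
    | zero => intro w; simp
    | succ k ih =>
      intro w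
      calc dist (f^[k+1] w) (g^[k+1] w)
          = dist (f (f^[k] w)) (g (g^[k] w)) := by
            rw [Function.iterate_succ_apply', Function.iterate_succ_apply']
        _ ≤ dist (f (f^[k] w)) (f (g^[k] w)) + dist (f (g^[k] w)) (g (g^[k] w)) :=
            dist_triangle _ _ _
        _ ≤ A * dist (f^[k] w) (g^[k] w) + ε := add_le_add (hf _ _) (hfg _)
        _ ≤ A * (ε * ∑ i ∈ Finset.range k, A^i) + ε := by
            have := ih w
            nlinarith [dist_nonneg (x := f^[k] w) (y := g^[k] w)]
        _ = ε * ∑ i ∈ Finset.range (k+1), A^i := by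
            rw [geom_sum_succ]; ring
  have hu' : f^[n] u = u := Function.IsFixedPt.iterate hu n
  have hz' : g^[n] z = z := Function.IsFixedPt.iterate hz n
  have hmain : dist u z ≤ c * dist u z + ε * ∑ i ∈ Finset.range n, A^i := by
    calc dist u z = dist (f^[n] u) (g^[n] z) := by rw [hu', hz']
      _ ≤ dist (f^[n] u) (f^[n] z) + dist (f^[n] z) (g^[n] z) := dist_triangle _ _ _
      _ ≤ c * dist u z + ε * ∑ i ∈ Finset.range n, A^i :=
          add_le_add (hfn _ _) (key n z)
  have h1c : 0 < 1 - c := by linarith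
  rw [le_div_iff₀ h1c]
  linarith

lemma P_dist_slope (hT : (0:ℝ) ≤ T) {E : ℝ → ℝ} (hE : Continuous E) (s s' : ℝ)
    (w : C(Icc (0:ℝ) T, ℝ × ℝ)) :
    dist (P μ ν hT hE s w) (P μ ν hT hE s' w) ≤ |s - s'| := by
  rw [ContinuousMap.dist_le (abs_nonneg _)]
  intro t
  rw [P_apply, P_apply, Prod.dist_eq]
  apply max_le
  · simp [abs_nonneg]
  · rw [dist_add_right, Real.dist_eq]

lemma P_dist_forcing (hT : (0:ℝ) ≤ T) {E : ℝ → ℝ} (hE : Continuous E) (s : ℝ)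
    (M : ℝ) (hM : ∀ t, |E t| ≤ M) (w : C(Icc (0:ℝ) T, ℝ × ℝ)) :
    dist (P μ ν hT hE s w) (P μ ν hT (continuous_const : Continuous fun _ : ℝ => (0:ℝ)) s w)
      ≤ M * T := by
  have hM0 : 0 ≤ M := (abs_nonneg (E 0)).trans (hM 0)
  rw [ContinuousMap.dist_le (mul_nonneg hM0 hT)]
  intro t
  have ht0 : (0:ℝ) ≤ (t:ℝ) := t.2.1
  have htT : (t:ℝ) ≤ T := t.2.2
  rw [P_apply, P_apply, Prod.dist_eq]
  apply max_le
  · simp [mul_nonneg hM0 hT]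
  · rw [dist_add_left, Real.dist_eq]
    have hGc : Continuous fun τ : ℝ => G μ ν (w (projIcc 0 T hT τ)).1 :=
      (G_cont μ ν).comp (continuous_fst.comp (w.continuous.comp continuous_projIcc))
    have hsub : (∫ τ in (0:ℝ)..(t:ℝ), (E τ - G μ ν (w (projIcc 0 T hT τ)).1))
        - (∫ τ in (0:ℝ)..(t:ℝ), ((0:ℝ) - G μ ν (w (projIcc 0 T hT τ)).1))
        = ∫ τ in (0:ℝ)..(t:ℝ), E τ := by
      have hc1 : Continuous fun τ : ℝ => E τ - G μ ν (w (projIcc 0 T hT τ)).1 := hE.sub hGc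
      have hc2 : Continuous fun τ : ℝ => (0:ℝ) - G μ ν (w (projIcc 0 T hT τ)).1 :=
        continuous_const.sub hGc
      rw [← intervalIntegral.integral_sub (hc1.intervalIntegrable 0 t)
        (hc2.intervalIntegrable 0 t)]
      congr 1
      ext τ
      ring
    rw [hsub]
    have := intervalIntegral.norm_integral_le_of_norm_le_const
      (a := (0:ℝ)) (b := (t:ℝ)) (C := M) (f := E) (fun x _ => by
        rw [Real.norm_eq_abs]; exact hM x)
    rw [Real.norm_eq_abs] at this
    refine this.trans ?_
    rw [sub_zero, abs_of_nonneg ht0]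
    exact mul_le_mul_of_nonneg_left htT hM0

/-- The explicit solution of the homogeneous problem with slope `s`. -/
def Z (μ : ℝ) (T s : ℝ) : C(Icc (0:ℝ) T, ℝ × ℝ) :=
  ⟨fun t => (s * Real.sin (Real.sqrt μ * (t:ℝ)) / Real.sqrt μ,
    s * Real.cos (Real.sqrt μ * (t:ℝ))), by fun_prop⟩

lemma P_Z (hT : (0:ℝ) ≤ T) (s : ℝ) {c : ℝ} (hc : 0 < c)
    (hsol : ∀ τ ∈ Icc (0:ℝ) T,
      G μ ν (s * Real.sin (Real.sqrt c * τ) / Real.sqrt c)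
        = c * (s * Real.sin (Real.sqrt c * τ) / Real.sqrt c)) :
    P μ ν hT (continuous_const : Continuous fun _ : ℝ => (0:ℝ)) s (Z c T s) = Z c T s := by
  have hsc0 : 0 < Real.sqrt c := Real.sqrt_pos.mpr hc
  have hsc : Real.sqrt c ≠ 0 := hsc0.ne'
  have hcc : Real.sqrt c * Real.sqrt c = c := Real.mul_self_sqrt hc.le
  apply ContinuousMap.ext
  intro t
  have ht0 : (0:ℝ) ≤ (t:ℝ) := t.2.1
  have htT : (t:ℝ) ≤ T := t.2.2
  rw [P_apply]
  have hproj : ∀ τ ∈ uIcc (0:ℝ) (t:ℝ), τ ∈ Icc (0:ℝ) T := by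
    intro τ hτ
    rw [uIcc_of_le ht0] at hτ
    exact ⟨hτ.1, hτ.2.trans htT⟩
  have comp1 : (∫ τ in (0:ℝ)..(t:ℝ), (Z c T s (projIcc 0 T hT τ)).2)
      = s * Real.sin (Real.sqrt c * (t:ℝ)) / Real.sqrt c := by
    rw [intervalIntegral.integral_congr
      (g := fun τ => s * Real.cos (Real.sqrt c * τ))
      (fun τ hτ => by
        rw [projIcc_of_mem hT (hproj τ hτ)]
        rfl)]
    have hderiv : ∀ τ ∈ uIcc (0:ℝ) (t:ℝ),
        HasDerivAt (fun x => s * Real.sin (Real.sqrt c * x) / Real.sqrt c)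
          (s * Real.cos (Real.sqrt c * τ)) τ := by
      intro τ _
      have h1 : HasDerivAt (fun x : ℝ => Real.sqrt c * x) (Real.sqrt c * 1) τ :=
        (hasDerivAt_id τ).const_mul (Real.sqrt c)
      have h2 := (Real.hasDerivAt_sin (Real.sqrt c * τ)).comp τ h1
      have h3 := (h2.const_mul s).div_const (Real.sqrt c)
      refine h3.congr_deriv ?_
      rw [div_eq_iff hsc]
      ring
    rw [intervalIntegral.integral_eq_sub_of_hasDerivAt hderiv
      ((continuous_const.mul (Real.continuous_cos.comp
        (continuous_const.mul continuous_id))).intervalIntegrable 0 t)]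
    simp
  have comp2 : (s + ∫ τ in (0:ℝ)..(t:ℝ),
      ((0:ℝ) - G μ ν (Z c T s (projIcc 0 T hT τ)).1))
      = s * Real.cos (Real.sqrt c * (t:ℝ)) := by
    rw [intervalIntegral.integral_congr
      (g := fun τ => -(s * Real.sqrt c * Real.sin (Real.sqrt c * τ)))
      (fun τ hτ => by
        rw [projIcc_of_mem hT (hproj τ hτ)]
        show (0:ℝ) - G μ ν (s * Real.sin (Real.sqrt c * τ) / Real.sqrt c) = _
        rw [hsol τ (hproj τ hτ)]
        field_simp
        ring_nf
        rw [Real.sq_sqrt hc.le])]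
    have hderiv : ∀ τ ∈ uIcc (0:ℝ) (t:ℝ),
        HasDerivAt (fun x => s * Real.cos (Real.sqrt c * x))
          (-(s * Real.sqrt c * Real.sin (Real.sqrt c * τ))) τ := by
      intro τ _
      have h1 : HasDerivAt (fun x : ℝ => Real.sqrt c * x) (Real.sqrt c * 1) τ :=
        (hasDerivAt_id τ).const_mul (Real.sqrt c)
      have h2 := (Real.hasDerivAt_cos (Real.sqrt c * τ)).comp τ h1
      have h3 := h2.const_mul s
      refine h3.congr_deriv ?_
      ring
    rw [intervalIntegral.integral_eq_sub_of_hasDerivAt hderiv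
      (((continuous_const.mul (Real.continuous_sin.comp
        (continuous_const.mul continuous_id))).neg).intervalIntegrable 0 t)]
    simp
  calc ((∫ τ in (0:ℝ)..(t:ℝ), (Z c T s (projIcc 0 T hT τ)).2),
        s + ∫ τ in (0:ℝ)..(t:ℝ), ((0:ℝ) - G μ ν (Z c T s (projIcc 0 T hT τ)).1))
      = (s * Real.sin (Real.sqrt c * (t:ℝ)) / Real.sqrt c,
        s * Real.cos (Real.sqrt c * (t:ℝ))) := by rw [comp1, comp2]
    _ = Z c T s t := rfl

end

end DNFAux

/-- Nonresonance below the first Fučík curve: if `T < π/√μ` and `T < π/√ν`, then for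
any continuous bounded `e`, the Dirichlet problem `x'' + μx⁺ − νx⁻ = e(t)`,
`x(0) = 0 = x(T)` has at least one solution. -/
theorem dirichlet_nonresonance_first (μ ν T : ℝ) (hμ : 0 < μ) (hν : 0 < ν)
    (hT : 0 < T)
    (hTμ : T < Real.pi / Real.sqrt μ) (hTν : T < Real.pi / Real.sqrt ν)
    (e : ℝ → ℝ) (he : Continuous e) (hbd : ∃ M : ℝ, ∀ t, |e t| ≤ M) :
    ∃ x x' : ℝ → ℝ,
      (∀ t ∈ Set.Icc 0 T, HasDerivAt x (x' t) t) ∧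
      (∀ t ∈ Set.Icc 0 T,
        HasDerivAt x' (e t - (μ * max (x t) 0 - ν * max (-(x t)) 0)) t) ∧
      x 0 = 0 ∧ x T = 0 := by
  classical
  obtain ⟨M, hM⟩ := hbd
  have hM0 : 0 ≤ M := (abs_nonneg (e 0)).trans (hM 0)
  have hT' : (0:ℝ) ≤ T := hT.le
  have hL0 : (0:ℝ) ≤ 1 + μ + ν := by linarith
  haveI : Nonempty C(Set.Icc (0:ℝ) T, ℝ × ℝ) := ⟨ContinuousMap.const _ (0,0)⟩
  obtain ⟨n, hn⟩ : ∃ n : ℕ, ((1 + μ + ν) * T)^n / (Nat.factorial n) < 1 := by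
    have h := FloorSemiring.tendsto_pow_div_factorial_atTop ((1 + μ + ν) * T)
    exact (h.eventually (gt_mem_nhds one_pos)).exists
  have hc0 : (0:ℝ) ≤ ((1 + μ + ν) * T)^n / (Nat.factorial n) := by positivity
  have h1c : (0:ℝ) < 1 - ((1 + μ + ν) * T)^n / (Nat.factorial n) := by linarith
  -- Lipschitz constants of the Picard operators
  have hlip1 : ∀ (E : ℝ → ℝ) (hE : Continuous E) (s : ℝ)
      (a b : C(Set.Icc (0:ℝ) T, ℝ × ℝ)),
      dist (DNFAux.P μ ν hT' hE s a) (DNFAux.P μ ν hT' hE s b)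
        ≤ ((1 + μ + ν) * T) * dist a b := by
    intro E hE s a b
    have h := DNFAux.P_iter_dist hμ.le hν.le hT' hE s 1 a b
    simpa using h
  have hlipn : ∀ (E : ℝ → ℝ) (hE : Continuous E) (s : ℝ)
      (a b : C(Set.Icc (0:ℝ) T, ℝ × ℝ)),
      dist ((DNFAux.P μ ν hT' hE s)^[n] a) ((DNFAux.P μ ν hT' hE s)^[n] b)
        ≤ (((1 + μ + ν) * T)^n / (Nat.factorial n)) * dist a b :=
    fun E hE s a b => DNFAux.P_iter_dist hμ.le hν.le hT' hE s n a b
  -- fixed points for each slope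
  have hex : ∀ s : ℝ, ∃ u, DNFAux.P μ ν hT' he s u = u := fun s =>
    DNFAux.exists_fixedPoint _ n _ hc0 hn (hlipn e he s)
  choose u hu using hex
  -- geometric sum constant
  have hS0 : (0:ℝ) ≤ ∑ i ∈ Finset.range n, ((1 + μ + ν) * T)^i :=
    Finset.sum_nonneg fun i _ => pow_nonneg (by positivity) i
  -- the shooting function
  have hTmem : T ∈ Set.Icc (0:ℝ) T := ⟨hT', le_rfl⟩
  set h : ℝ → ℝ := fun s => (u s ⟨T, hTmem⟩).1 with hhdef
  -- continuity of the shooting function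
  have hslope : ∀ s s' : ℝ, dist (u s) (u s')
      ≤ |s - s'| * (∑ i ∈ Finset.range n, ((1 + μ + ν) * T)^i)
          / (1 - ((1 + μ + ν) * T)^n / (Nat.factorial n)) := by
    intro s s'
    exact DNFAux.dist_fixedPoints _ _ _ _ _ (by positivity) (abs_nonneg _)
      (hlip1 e he s) (fun w => DNFAux.P_dist_slope hT' he s s' w) n hn
      (hlipn e he s) (hu s) (hu s')
  have hcont : Continuous h := by
    have hK0 : (0:ℝ) ≤ (∑ i ∈ Finset.range n, ((1 + μ + ν) * T)^i)
        / (1 - ((1 + μ + ν) * T)^n / (Nat.factorial n)) := div_nonneg hS0 h1c.le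
    have : LipschitzWith (Real.toNNReal ((∑ i ∈ Finset.range n, ((1 + μ + ν) * T)^i)
        / (1 - ((1 + μ + ν) * T)^n / (Nat.factorial n)))) h := by
      apply LipschitzWith.of_dist_le_mul
      intro s s'
      rw [Real.coe_toNNReal _ hK0]
      calc dist (h s) (h s') ≤ dist (u s ⟨T, hTmem⟩) (u s' ⟨T, hTmem⟩) := by
            rw [Prod.dist_eq]; exact le_max_left _ _
        _ ≤ dist (u s) (u s') := ContinuousMap.dist_apply_le_dist _
        _ ≤ |s - s'| * (∑ i ∈ Finset.range n, ((1 + μ + ν) * T)^i)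
              / (1 - ((1 + μ + ν) * T)^n / (Nat.factorial n)) := hslope s s'
        _ = (∑ i ∈ Finset.range n, ((1 + μ + ν) * T)^i)
              / (1 - ((1 + μ + ν) * T)^n / (Nat.factorial n)) * dist s s' := by
            rw [Real.dist_eq]; ring
    exact this.continuous
  -- comparison constant
  set C₀ : ℝ := (M * T) * (∑ i ∈ Finset.range n, ((1 + μ + ν) * T)^i)
      / (1 - ((1 + μ + ν) * T)^n / (Nat.factorial n)) with hC₀def
  have hC₀0 : 0 ≤ C₀ := by
    rw [hC₀def]; exact div_nonneg (mul_nonneg (mul_nonneg hM0 hT') hS0) h1c.le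
  -- comparison with explicit homogeneous solutions
  have hμs : 0 < Real.sqrt μ := Real.sqrt_pos.mpr hμ
  have hνs : 0 < Real.sqrt ν := Real.sqrt_pos.mpr hν
  have hμT : Real.sqrt μ * T < Real.pi := by
    have := (lt_div_iff₀ hμs).mp hTμ
    linarith [this]
  have hνT : Real.sqrt ν * T < Real.pi := by
    have := (lt_div_iff₀ hνs).mp hTν
    linarith [this]
  have hsinμ : ∀ τ ∈ Set.Icc (0:ℝ) T, 0 ≤ Real.sin (Real.sqrt μ * τ) := by
    intro τ hτ
    apply Real.sin_nonneg_of_nonneg_of_le_pi (mul_nonneg hμs.le hτ.1)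
    have : Real.sqrt μ * τ ≤ Real.sqrt μ * T := mul_le_mul_of_nonneg_left hτ.2 hμs.le
    linarith
  have hsinν : ∀ τ ∈ Set.Icc (0:ℝ) T, 0 ≤ Real.sin (Real.sqrt ν * τ) := by
    intro τ hτ
    apply Real.sin_nonneg_of_nonneg_of_le_pi (mul_nonneg hνs.le hτ.1)
    have : Real.sqrt ν * τ ≤ Real.sqrt ν * T := mul_le_mul_of_nonneg_left hτ.2 hνs.le
    linarith
  have hcmpμ : ∀ s : ℝ, 0 ≤ s → dist (u s) (DNFAux.Z μ T s) ≤ C₀ := by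
    intro s hs
    have hsol : ∀ τ ∈ Set.Icc (0:ℝ) T,
        DNFAux.G μ ν (s * Real.sin (Real.sqrt μ * τ) / Real.sqrt μ)
          = μ * (s * Real.sin (Real.sqrt μ * τ) / Real.sqrt μ) := by
      intro τ hτ
      exact DNFAux.G_of_nonneg
        (div_nonneg (mul_nonneg hs (hsinμ τ hτ)) hμs.le)
    rw [hC₀def]
    exact DNFAux.dist_fixedPoints _ _ _ _ _ (by positivity) (mul_nonneg hM0 hT')
      (hlip1 e he s) (fun w => DNFAux.P_dist_forcing hT' he s M hM w) n hn
      (hlipn e he s) (hu s) (DNFAux.P_Z hT' s hμ hsol)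
  have hcmpν : ∀ s : ℝ, s ≤ 0 → dist (u s) (DNFAux.Z ν T s) ≤ C₀ := by
    intro s hs
    have hsol : ∀ τ ∈ Set.Icc (0:ℝ) T,
        DNFAux.G μ ν (s * Real.sin (Real.sqrt ν * τ) / Real.sqrt ν)
          = ν * (s * Real.sin (Real.sqrt ν * τ) / Real.sqrt ν) := by
      intro τ hτ
      exact DNFAux.G_of_nonpos
        (div_nonpos_of_nonpos_of_nonneg
          (mul_nonpos_of_nonpos_of_nonneg hs (hsinν τ hτ)) hνs.le)
    rw [hC₀def]
    exact DNFAux.dist_fixedPoints _ _ _ _ _ (by positivity) (mul_nonneg hM0 hT')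
      (hlip1 e he s) (fun w => DNFAux.P_dist_forcing hT' he s M hM w) n hn
      (hlipn e he s) (hu s) (DNFAux.P_Z hT' s hν hsol)
  -- positivity of sin values at T
  have hwμ : 0 < Real.sin (Real.sqrt μ * T) / Real.sqrt μ := by
    apply div_pos _ hμs
    exact Real.sin_pos_of_pos_of_lt_pi (mul_pos hμs hT) hμT
  have hwν : 0 < Real.sin (Real.sqrt ν * T) / Real.sqrt ν := by
    apply div_pos _ hνs
    exact Real.sin_pos_of_pos_of_lt_pi (mul_pos hνs hT) hνT
  -- bounds on the shooting function
  have hbound : ∀ s : ℝ, 0 ≤ s →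
      s * (Real.sin (Real.sqrt μ * T) / Real.sqrt μ) - C₀ ≤ h s := by
    intro s hs
    have h1 : dist (h s) (s * Real.sin (Real.sqrt μ * T) / Real.sqrt μ) ≤ C₀ := by
      calc dist (h s) (s * Real.sin (Real.sqrt μ * T) / Real.sqrt μ)
          = dist (u s ⟨T, hTmem⟩).1 (DNFAux.Z μ T s ⟨T, hTmem⟩).1 := rfl
        _ ≤ dist (u s ⟨T, hTmem⟩) (DNFAux.Z μ T s ⟨T, hTmem⟩) := by
            rw [Prod.dist_eq]; exact le_max_left _ _
        _ ≤ dist (u s) (DNFAux.Z μ T s) := ContinuousMap.dist_apply_le_dist _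
        _ ≤ C₀ := hcmpμ s hs
    rw [Real.dist_eq] at h1
    have := abs_le.mp h1
    rw [mul_div_assoc] at this
    linarith [this.1]
  have hbound' : ∀ s : ℝ, s ≤ 0 →
      h s ≤ s * (Real.sin (Real.sqrt ν * T) / Real.sqrt ν) + C₀ := by
    intro s hs
    have h1 : dist (h s) (s * Real.sin (Real.sqrt ν * T) / Real.sqrt ν) ≤ C₀ := by
      calc dist (h s) (s * Real.sin (Real.sqrt ν * T) / Real.sqrt ν)
          = dist (u s ⟨T, hTmem⟩).1 (DNFAux.Z ν T s ⟨T, hTmem⟩).1 := rfl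
        _ ≤ dist (u s ⟨T, hTmem⟩) (DNFAux.Z ν T s ⟨T, hTmem⟩) := by
            rw [Prod.dist_eq]; exact le_max_left _ _
        _ ≤ dist (u s) (DNFAux.Z ν T s) := ContinuousMap.dist_apply_le_dist _
        _ ≤ C₀ := hcmpν s hs
    rw [Real.dist_eq] at h1
    have := abs_le.mp h1
    rw [mul_div_assoc] at this
    linarith [this.2]
  -- the two shooting slopes
  set sp : ℝ := (C₀ + 1) / (Real.sin (Real.sqrt μ * T) / Real.sqrt μ) with hspdef
  set sm : ℝ := -((C₀ + 1) / (Real.sin (Real.sqrt ν * T) / Real.sqrt ν)) with hsmdef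
  have hsp0 : 0 ≤ sp := by positivity
  have hsm0 : sm ≤ 0 := by
    rw [hsmdef]
    simp only [neg_nonpos]
    positivity
  have hhp : 1 ≤ h sp := by
    have := hbound sp hsp0
    have heq : sp * (Real.sin (Real.sqrt μ * T) / Real.sqrt μ) = C₀ + 1 :=
      div_mul_cancel₀ _ hwμ.ne'
    linarith
  have hhm : h sm ≤ -1 := by
    have := hbound' sm hsm0
    have heq : sm * (Real.sin (Real.sqrt ν * T) / Real.sqrt ν) = -(C₀ + 1) := by
      rw [hsmdef, neg_mul, div_mul_cancel₀ _ hwν.ne']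
    linarith
  -- intermediate value theorem
  have hsmsp : sm ≤ sp := le_trans hsm0 hsp0
  have hivt := intermediate_value_Icc hsmsp hcont.continuousOn
  have h0mem : (0:ℝ) ∈ Set.Icc (h sm) (h sp) := ⟨by linarith, by linarith⟩
  obtain ⟨s₀, _, hs₀⟩ := hivt h0mem
  -- build the solution from the fixed point at slope s₀
  have hf1c : Continuous fun τ : ℝ => ((u s₀) (Set.projIcc 0 T hT' τ)).2 :=
    continuous_snd.comp ((u s₀).continuous.comp continuous_projIcc)
  have hf2c : Continuous fun τ : ℝ =>
      e τ - DNFAux.G μ ν ((u s₀) (Set.projIcc 0 T hT' τ)).1 :=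
    he.sub ((DNFAux.G_cont μ ν).comp
      (continuous_fst.comp ((u s₀).continuous.comp continuous_projIcc)))
  refine ⟨fun t => ∫ τ in (0:ℝ)..t, ((u s₀) (Set.projIcc 0 T hT' τ)).2,
    fun t => s₀ + ∫ τ in (0:ℝ)..t,
      (e τ - DNFAux.G μ ν ((u s₀) (Set.projIcc 0 T hT' τ)).1), ?_, ?_, ?_, ?_⟩
  · intro t ht
    have hd := (hf1c.integral_hasStrictDerivAt 0 t).hasDerivAt
    have hval : ((u s₀) (Set.projIcc 0 T hT' t)).2
        = s₀ + ∫ τ in (0:ℝ)..t,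
          (e τ - DNFAux.G μ ν ((u s₀) (Set.projIcc 0 T hT' τ)).1) := by
      rw [Set.projIcc_of_mem hT' ht]
      conv_lhs => rw [← hu s₀]
      rfl
    rwa [hval] at hd
  · intro t ht
    have hd := ((hf2c.integral_hasStrictDerivAt 0 t).hasDerivAt).const_add s₀
    have hval : e t - DNFAux.G μ ν ((u s₀) (Set.projIcc 0 T hT' t)).1
        = e t - (μ * max ((∫ τ in (0:ℝ)..t, ((u s₀) (Set.projIcc 0 T hT' τ)).2)) 0
            - ν * max (-(∫ τ in (0:ℝ)..t, ((u s₀) (Set.projIcc 0 T hT' τ)).2)) 0) := by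
      congr 1
      have hfst : ((u s₀) (Set.projIcc 0 T hT' t)).1
          = ∫ τ in (0:ℝ)..t, ((u s₀) (Set.projIcc 0 T hT' τ)).2 := by
        rw [Set.projIcc_of_mem hT' ht]
        conv_lhs => rw [← hu s₀]
        rfl
      rw [← hfst]
      rfl
    rwa [hval] at hd
  · exact intervalIntegral.integral_same
  · have hfst : ((u s₀) (Set.projIcc 0 T hT' T)).1
        = ∫ τ in (0:ℝ)..T, ((u s₀) (Set.projIcc 0 T hT' τ)).2 := by
      rw [Set.projIcc_of_mem hT' hTmem]
      conv_lhs => rw [← hu s₀]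
      rfl
    show (∫ τ in (0:ℝ)..T, ((u s₀) (Set.projIcc 0 T hT' τ)).2) = 0
    rw [← hfst, Set.projIcc_of_mem hT' hTmem]
    exact hs₀
end
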